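/- arXiv:1408.5797 — 4 statements merged into one kernel-verified Lean document; each statement's English description precedes it below -/
import Mathlib

section
/- Let k, ℓ ≥ 1 and write points of ℝᵏ × ℝˡ as z = (t, y); fix z₀ = (t₀, y₀). Let u be an upper semicontinuous function of t alone, defined on a neighborhood of t₀ in ℝᵏ with values in [−∞, ∞), and let φ be a polynomial function of degree at most 2 on ℝᵏ × ℝˡ. Suppose there is a neighborhood N of z₀ such that u(t) < φ(t, y) for all (t, y) ∈ N with (t, y) ≠ z₀, and u(t₀) = φ(z₀). Then there exist a polynomial φ̄ of degree at most 2 on ℝᵏ and a neighborhood N′ of z₀ such that u(t) ≤ φ̄(t) ≤ φ(t, y) for all (t, y) ∈ N′. -/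
/-!
On the slice `t = t₀` the quadratic `y ↦ φ (t₀, y)` has a strict local minimum at `y₀`, so its
linear part at `y₀` vanishes and its quadratic part `Q` is positive definite. Inverting the
polarisation of `Q` gives a linear map `m` such that, for every `t`, `y ↦ φ (t, y)` is minimised at
`y₀ + m (t - t₀)`. Hence `ψ t = φ (t, y₀ + m (t - t₀))` is a quadratic polynomial below `φ`
everywhere, and `u ≤ ψ` near `t₀` because `(t, y₀ + m (t - t₀)) → (t₀, y₀)` as `t → t₀`.
-/

open Set Filter Topology

noncomputable section

def IsQuadPoly {E : Type*} [AddCommGroup E] [Module ℝ E] (φ : E → ℝ) : Prop :=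
  ∃ (c : ℝ) (l : E →ₗ[ℝ] ℝ) (q : E →ₗ[ℝ] E →ₗ[ℝ] ℝ), ∀ z, φ z = c + l z + q z z

namespace IsQuadPoly

variable {E F : Type*} [AddCommGroup E] [Module ℝ E] [AddCommGroup F] [Module ℝ F]

theorem comp_add_linearMap {φ : E → ℝ} (hφ : IsQuadPoly φ) (v : E) (G : F →ₗ[ℝ] E) :
    IsQuadPoly fun x => φ (v + G x) := by
  obtain ⟨c, L, q, hφ⟩ := hφ
  refine ⟨c + L v + q v v, L ∘ₗ G + q v ∘ₗ G + q.flip v ∘ₗ G, q.compl₁₂ G G, fun x => ?_⟩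
  simp only [hφ, map_add, LinearMap.add_apply, LinearMap.comp_apply, LinearMap.flip_apply,
    LinearMap.compl₁₂_apply]
  ring

theorem exists_prod_decomposition {φ : E × F → ℝ} (hφ : IsQuadPoly φ) :
    ∃ (R : E → ℝ) (a : F →ₗ[ℝ] ℝ) (B : E →ₗ[ℝ] F →ₗ[ℝ] ℝ) (Q : F →ₗ[ℝ] F →ₗ[ℝ] ℝ),
      ∀ s h, φ (s, h) = R s + a h + B s h + Q h h := by
  obtain ⟨c, L, q, hφ⟩ := hφ
  let ι₁ := LinearMap.inl ℝ E F
  let ι₂ := LinearMap.inr ℝ E F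
  refine ⟨fun s => c + L (ι₁ s) + q (ι₁ s) (ι₁ s), L ∘ₗ ι₂,
    q.compl₁₂ ι₁ ι₂ + (q.compl₁₂ ι₂ ι₁).flip, q.compl₁₂ ι₂ ι₂, fun s h => ?_⟩
  have hsplit : ((s, h) : E × F) = ι₁ s + ι₂ h := by simp [ι₁, ι₂]
  simp only [hφ, hsplit, map_add, LinearMap.add_apply, LinearMap.comp_apply,
    LinearMap.flip_apply, LinearMap.compl₁₂_apply]
  ring

end IsQuadPoly

theorem eq_zero_and_pos_of_eventually_pos {a b : ℝ}
    (h : ∀ᶠ r in 𝓝[≠] (0 : ℝ), 0 < a * r + b * r ^ 2) : a = 0 ∧ 0 < b := by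
  have hlim : Tendsto (fun r => a + b * r) (𝓝 0) (𝓝 a) :=
    Continuous.tendsto' (by fun_prop) 0 a (by simp)
  have hright : ∀ᶠ r in 𝓝[>] (0 : ℝ), 0 < a + b * r := by
    filter_upwards [nhdsGT_le_nhdsNE 0 h, self_mem_nhdsWithin] with r hr (hr0 : 0 < r)
    exact pos_of_mul_pos_right (by linarith : 0 < r * (a + b * r)) hr0.le
  have hleft : ∀ᶠ r in 𝓝[<] (0 : ℝ), a + b * r < 0 := by
    filter_upwards [nhdsLT_le_nhdsNE 0 h, self_mem_nhdsWithin] with r hr (hr0 : r < 0)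
    nlinarith
  have ha : a = 0 := le_antisymm
    (le_of_tendsto (hlim.mono_left nhdsWithin_le_nhds) (hleft.mono fun _ => le_of_lt))
    (ge_of_tendsto (hlim.mono_left nhdsWithin_le_nhds) (hright.mono fun _ => le_of_lt))
  obtain ⟨r, hr⟩ := h.exists
  subst ha
  exact ⟨rfl, pos_of_mul_pos_left (by linarith : 0 < b * r ^ 2) (sq_nonneg r)⟩

theorem LinearMap.eq_zero_and_pos_of_eventually_pos {F : Type*} [NormedAddCommGroup F]
    [NormedSpace ℝ F] {a : F →ₗ[ℝ] ℝ} {Q : F →ₗ[ℝ] F →ₗ[ℝ] ℝ}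
    (h : ∀ᶠ x in 𝓝[≠] (0 : F), 0 < a x + Q x x) : a = 0 ∧ ∀ x ≠ 0, 0 < Q x x := by
  have hline : ∀ x ≠ 0, a x = 0 ∧ 0 < Q x x := by
    intro x hx
    have hsmul : Tendsto (fun r : ℝ => r • x) (𝓝[≠] 0) (𝓝[≠] 0) := by
      refine tendsto_nhdsWithin_iff.mpr ⟨?_, ?_⟩
      · exact (Continuous.tendsto' (by fun_prop) 0 0 (zero_smul ℝ x)).mono_left nhdsWithin_le_nhds
      · filter_upwards [self_mem_nhdsWithin] with r hr using smul_ne_zero hr hx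
    apply _root_.eq_zero_and_pos_of_eventually_pos
    filter_upwards [hsmul.eventually h] with r hr
    convert hr using 1
    simp only [map_smul, LinearMap.smul_apply, smul_eq_mul]
    ring
  refine ⟨LinearMap.ext fun x => ?_, fun x hx => (hline x hx).2⟩
  rcases eq_or_ne x 0 with rfl | hx
  · simp
  · exact (hline x hx).1

theorem exists_linearMap_forall_le {E F : Type*} [AddCommGroup E] [Module ℝ E] [AddCommGroup F]
    [Module ℝ F] [FiniteDimensional ℝ F] (B : E →ₗ[ℝ] F →ₗ[ℝ] ℝ) {Q : F →ₗ[ℝ] F →ₗ[ℝ] ℝ}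
    (hQ : ∀ x ≠ 0, 0 < Q x x) :
    ∃ m : E →ₗ[ℝ] F, ∀ s x, B s (m s) + Q (m s) (m s) ≤ B s x + Q x x := by
  let S : LinearMap.BilinForm ℝ F := Q + Q.flip
  have hS : ∀ x, S x x = 0 → x = 0 := fun x hx => by
    by_contra hne
    have := hQ x hne
    simp only [S, LinearMap.add_apply, LinearMap.flip_apply] at hx
    linarith
  have hSnd : S.Nondegenerate := ⟨fun x hx => hS x (hx x), fun y hy => hS y (hy y)⟩
  -- `m s` is the critical point of `x ↦ B s x + Q x x`.
  refine ⟨-((S.toDual hSnd).symm.toLinearMap ∘ₗ B), fun s x => ?_⟩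
  set m := -((S.toDual hSnd).symm.toLinearMap ∘ₗ B)
  have hm : ∀ e, Q (m s) e + Q e (m s) = -B s e := fun e => by
    simpa [m, S] using LinearMap.BilinForm.apply_toDual_symm_apply (hB := hSnd) (-B s) e
  obtain ⟨e, rfl⟩ : ∃ e, x = m s + e := ⟨x - m s, by abel⟩
  have he : 0 ≤ Q e e := by
    rcases eq_or_ne e 0 with rfl | hne
    · simp
    · exact (hQ e hne).le
  simp only [map_add, LinearMap.add_apply]
  linarith [hm e]

theorem IsQuadPoly.exists_linearMap_le_of_eventually_lt {E F : Type*} [AddCommGroup E]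
    [Module ℝ E] [NormedAddCommGroup F] [NormedSpace ℝ F] [FiniteDimensional ℝ F]
    {φ : E × F → ℝ} (hφ : IsQuadPoly φ) {t₀ : E} {y₀ : F}
    (hmin : ∀ᶠ h in 𝓝[≠] (0 : F), φ (t₀, y₀) < φ (t₀, y₀ + h)) :
    ∃ m : E →ₗ[ℝ] F, ∀ t y, φ (t, y₀ + m (t - t₀)) ≤ φ (t, y) := by
  obtain ⟨R, a, B, Q, hdec⟩ :=
    (hφ.comp_add_linearMap (t₀, y₀) LinearMap.id).exists_prod_decomposition
  simp only [LinearMap.id_apply, Prod.mk_add_mk] at hdec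
  have hslice : ∀ h, φ (t₀, y₀ + h) - φ (t₀, y₀) = a h + Q h h := fun h => by
    have h₀ := hdec 0 0
    have h₁ := hdec 0 h
    simp only [add_zero, map_zero, LinearMap.zero_apply] at h₀ h₁
    linarith
  obtain ⟨rfl, hQ⟩ := LinearMap.eq_zero_and_pos_of_eventually_pos
    (hmin.mono fun h hh => by linarith [hslice h])
  obtain ⟨m, hm⟩ := exists_linearMap_forall_le B hQ
  refine ⟨m, fun t y => ?_⟩
  have h₁ := hdec (t - t₀) (m (t - t₀))
  have h₂ := hdec (t - t₀) (y - y₀)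
  simp only [add_sub_cancel, LinearMap.zero_apply] at h₁ h₂
  linarith [hm (t - t₀) (y - y₀)]

theorem stmt0_general (k l : ℕ)
    (t₀ : EuclideanSpace ℝ (Fin k)) (y₀ : EuclideanSpace ℝ (Fin l))
    (u : EuclideanSpace ℝ (Fin k) → EReal)
    (φ : EuclideanSpace ℝ (Fin k) × EuclideanSpace ℝ (Fin l) → ℝ)
    (hφ : IsQuadPoly φ)
    (hlt : ∀ᶠ z : EuclideanSpace ℝ (Fin k) × EuclideanSpace ℝ (Fin l) in 𝓝 (t₀, y₀),
      z ≠ (t₀, y₀) → u z.1 < ((φ z : ℝ) : EReal))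
    (heq : u t₀ = ((φ (t₀, y₀) : ℝ) : EReal)) :
    ∃ ψ : EuclideanSpace ℝ (Fin k) → ℝ, IsQuadPoly ψ ∧
      ∀ᶠ z : EuclideanSpace ℝ (Fin k) × EuclideanSpace ℝ (Fin l) in 𝓝 (t₀, y₀),
        u z.1 ≤ ((ψ z.1 : ℝ) : EReal) ∧ ψ z.1 ≤ φ z := by
  have hslice : Tendsto (fun h => (t₀, y₀ + h)) (𝓝 0) (𝓝 (t₀, y₀)) :=
    Continuous.tendsto' (by fun_prop) 0 _ (by simp)
  obtain ⟨m, hm⟩ := hφ.exists_linearMap_le_of_eventually_lt (t₀ := t₀) (y₀ := y₀) <|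
    eventually_nhdsWithin_iff.mpr <| (hslice.eventually hlt).mono fun h hh hne => by
      exact_mod_cast heq ▸ hh (by simpa using hne)
  let g t := (t, y₀ + m (t - t₀))
  have hg : Tendsto g (𝓝 t₀) (𝓝 (t₀, y₀)) :=
    Continuous.tendsto' (by fun_prop) _ _ (by simp [g])
  have hψ : IsQuadPoly (φ ∘ g) := by
    convert hφ.comp_add_linearMap (0, y₀ - m t₀) (LinearMap.id.prod m) using 2 with t
    simp only [Function.comp_apply, g]
    congr 1
    refine Prod.ext (by simp) ?_
    simp only [Prod.snd_add, LinearMap.prod_apply, Function.prod, LinearMap.id_apply, map_sub]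
    abel
  have hu : ∀ᶠ t in 𝓝 t₀, u t ≤ φ (g t) := by
    filter_upwards [hg.eventually hlt] with t ht
    rcases eq_or_ne t t₀ with rfl | hne
    · simp [g, heq]
    · exact (ht fun h => hne (congrArg Prod.fst h)).le
  refine ⟨φ ∘ g, hψ, ?_⟩
  filter_upwards [continuousAt_fst.eventually hu] with z hz using ⟨hz, hm z.1 z.2⟩

/-- If an upper semicontinuous function `u` of `t` alone is touched from above at
`z₀ = (t₀, y₀)` (strictly away from `z₀`) by a polynomial `φ(t,y)` of degree at most 2,
then there is a polynomial `ψ(t)` of degree at most 2 with `u(t) ≤ ψ(t) ≤ φ(t,y)`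
near `z₀`. -/
theorem stmt0 (k l : ℕ) (hk : 1 ≤ k) (hl : 1 ≤ l)
    (t₀ : EuclideanSpace ℝ (Fin k)) (y₀ : EuclideanSpace ℝ (Fin l))
    (u : EuclideanSpace ℝ (Fin k) → EReal)
    (hu_usc : ∃ V ∈ 𝓝 t₀, UpperSemicontinuousOn u V)
    (hu_fin : ∀ᶠ t in 𝓝 t₀, u t < ⊤)
    (φ : EuclideanSpace ℝ (Fin k) × EuclideanSpace ℝ (Fin l) → ℝ)
    (hφ : IsQuadPoly φ)
    (hlt : ∀ᶠ z : EuclideanSpace ℝ (Fin k) × EuclideanSpace ℝ (Fin l) in 𝓝 (t₀, y₀),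
      z ≠ (t₀, y₀) → u z.1 < ((φ z : ℝ) : EReal))
    (heq : u t₀ = ((φ (t₀, y₀) : ℝ) : EReal)) :
    ∃ ψ : EuclideanSpace ℝ (Fin k) → ℝ, IsQuadPoly ψ ∧
      ∀ᶠ z : EuclideanSpace ℝ (Fin k) × EuclideanSpace ℝ (Fin l) in 𝓝 (t₀, y₀),
        u z.1 ≤ ((ψ z.1 : ℝ) : EReal) ∧ ψ z.1 ≤ φ z :=
  stmt0_general k l t₀ y₀ u φ hφ hlt heq

end
end

section
/- Let F ⊆ Sym²(ℝⁿ) be a subequation. For t > 0 define the fiber (R_F)_t = {(λ, a) ∈ ℝ² : (λ/t)·P_{e⊥} + a·P_e ∈ F for every unit vector e ∈ ℝⁿ}. Let ψ be an upper semicontinuous function with values in [−∞, ∞) on an open interval I ⊆ (0, ∞), and let u(x) = ψ(|x|) on the annulus A = {x ∈ ℝⁿ : |x| ∈ I}. Then u is F-subharmonic on A if and only if ψ is R_F-subharmonic on I, i.e. for every t₀ ∈ I and every C² function φ defined near t₀ with ψ ≤ φ near t₀ and ψ(t₀) = φ(t₀), one has (φ′(t₀), φ″(t₀)) ∈ (R_F)_{t₀}.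 -/
/-!
A radial test function `φ (‖x‖)` has Hessian `(φ'(t)/t) P_{e⊥} + φ''(t) P_e` at `t e`, which turns
the test condition for `u` into the one for `ψ`.

Conversely, let `Φ` touch `u` from above at `x₀ = t e`. On the sphere `‖x‖ = t` the function `Φ`
has a local minimum at `x₀`; differentiating twice along great circles gives `DΦ(x₀) = 0` on `e⊥`
and `D²Φ(x₀) ≥ c` on `e⊥`, where `c = DΦ(x₀) e / t`. Along each spiral `r ↦ r ω(r - t)`, with `ω`
a great circle starting at `e` with velocity `v / t` (`v ⊥ e`), `Φ` is a test function for `ψ` at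
`t`, so `c P_{e⊥} + q(v) P_e ∈ F` with `q(v) = D²Φ(x₀)(e + v, e + v) - c ‖v‖²`. If `v` minimises
`q(v) + ε ‖v‖²` over `e⊥`, a Schur complement computation shows that
`D²Φ(x₀) + ε P_{e⊥} - (c P_{e⊥} + q(v) P_e)` is positive semidefinite, hence
`D²Φ(x₀) + ε P_{e⊥} ∈ F`; closedness of `F` lets `ε → 0`.
-/

open Set Filter Topology Matrix

noncomputable section

abbrev EucSp (n : ℕ) := EuclideanSpace ℝ (Fin n)

/-- The rank-one orthogonal projection matrix `P_e = e eᵀ` associated to a vector `e`. -/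
def projMat {n : ℕ} (e : EucSp n) : Matrix (Fin n) (Fin n) ℝ :=
  Matrix.of fun i j => e i * e j

/-- A (pure second-order, constant coefficient) subequation: a closed set of symmetric
matrices satisfying positivity `F + 𝒫 ⊆ F`. -/
def IsSubequation {n : ℕ} (F : Set (Matrix (Fin n) (Fin n) ℝ)) : Prop :=
  (∀ A ∈ F, A.IsSymm) ∧ IsClosed F ∧
    ∀ A ∈ F, ∀ P : Matrix (Fin n) (Fin n) ℝ, P.PosSemidef → A + P ∈ F

/-- The Hessian matrix of a function `φ : ℝⁿ → ℝ` at `x`. -/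
def hess {n : ℕ} (φ : EucSp n → ℝ) (x : EucSp n) : Matrix (Fin n) (Fin n) ℝ :=
  Matrix.of fun i j =>
    iteratedFDeriv ℝ 2 φ x ![EuclideanSpace.single i (1 : ℝ), EuclideanSpace.single j (1 : ℝ)]

/-- `u` is `F`-subharmonic (a viscosity subsolution) on `X`. -/
def IsFSubharmonicOn {n : ℕ} (F : Set (Matrix (Fin n) (Fin n) ℝ))
    (X : Set (EucSp n)) (u : EucSp n → EReal) : Prop :=
  UpperSemicontinuousOn u X ∧ (∀ x ∈ X, u x < ⊤) ∧
    ∀ x₀ ∈ X, ∀ φ : EucSp n → ℝ, ContDiffAt ℝ 2 φ x₀ →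
      (∀ᶠ x in 𝓝[X] x₀, u x ≤ ((φ x : ℝ) : EReal)) → u x₀ = ((φ x₀ : ℝ) : EReal) →
      hess φ x₀ ∈ F

/-- The fiber at `t > 0` of the radial subequation `R_F` associated to `F`. -/
def radialFiber {n : ℕ} (F : Set (Matrix (Fin n) (Fin n) ℝ)) (t : ℝ) : Set (ℝ × ℝ) :=
  {q | ∀ e : EucSp n, ‖e‖ = 1 →
    (q.1 / t) • ((1 : Matrix (Fin n) (Fin n) ℝ) - projMat e) + q.2 • projMat e ∈ F}

/-- `ψ` is `R_F`-subharmonic on `I ⊆ (0,∞)`. -/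
def IsRadialSubharmonicOn {n : ℕ} (F : Set (Matrix (Fin n) (Fin n) ℝ))
    (I : Set ℝ) (ψ : ℝ → EReal) : Prop :=
  UpperSemicontinuousOn ψ I ∧ (∀ t ∈ I, ψ t < ⊤) ∧
    ∀ t₀ ∈ I, ∀ φ : ℝ → ℝ, ContDiffAt ℝ 2 φ t₀ →
      (∀ᶠ t in 𝓝[I] t₀, ψ t ≤ ((φ t : ℝ) : EReal)) → ψ t₀ = ((φ t₀ : ℝ) : EReal) →
      (deriv φ t₀, deriv (deriv φ) t₀) ∈ radialFiber F t₀

theorem IsLocalMin.deriv_deriv_nonneg {f : ℝ → ℝ} {a : ℝ} (hmin : IsLocalMin f a)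
    (hf : ContinuousAt f a) : 0 ≤ deriv (deriv f) a := by
  by_contra! hneg
  -- the second derivative test would make `a` a local maximum too, so `f` is locally constant
  have hmax : IsLocalMax f a := isLocalMax_of_deriv_deriv_neg hneg hmin.deriv_eq_zero hf
  have hconst : ∀ᶠ x in 𝓝 a, f x = f a := by
    filter_upwards [hmin, hmax] with x h₁ h₂ using le_antisymm h₂ h₁
  have hderiv : deriv f =ᶠ[𝓝 a] fun _ => 0 := by
    filter_upwards [eventually_eventually_nhds.2 hconst] with x hx
    have hx' : f =ᶠ[𝓝 x] fun _ => f a := hx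
    rw [hx'.deriv_eq, deriv_const]
  simp [hderiv.deriv_eq] at hneg

theorem ContDiffAt.hasDerivAt_deriv {f : ℝ → ℝ} {a : ℝ} (hf : ContDiffAt ℝ 2 f a) :
    HasDerivAt (deriv f) (deriv (deriv f) a) a :=
  ((hf.derivWithin (m := 1) (by norm_num)).differentiableAt one_ne_zero).hasDerivAt

theorem ContDiffAt.deriv_comp_curve {E : Type*} [NormedAddCommGroup E] [NormedSpace ℝ E]
    {Φ : E → ℝ} {γ γ' : ℝ → E} {t₀ : ℝ} {a : E}
    (hΦ : ContDiffAt ℝ 2 Φ (γ t₀)) (hγ : ∀ t, HasDerivAt γ (γ' t) t)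
    (hγ' : HasDerivAt γ' a t₀) :
    deriv (Φ ∘ γ) t₀ = fderiv ℝ Φ (γ t₀) (γ' t₀) ∧
    deriv (deriv (Φ ∘ γ)) t₀ =
      fderiv ℝ (fderiv ℝ Φ) (γ t₀) (γ' t₀) (γ' t₀) + fderiv ℝ Φ (γ t₀) a := by
  have hD : ∀ᶠ t in 𝓝 t₀, HasDerivAt (Φ ∘ γ) (fderiv ℝ Φ (γ t) (γ' t)) t := by
    filter_upwards [(hγ t₀).continuousAt.eventually (hΦ.eventually (by simp))] with t ht
    exact (ht.differentiableAt (by norm_num)).hasFDerivAt.comp_hasDerivAt t (hγ t)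
  have hD2 : HasFDerivAt (fderiv ℝ Φ) (fderiv ℝ (fderiv ℝ Φ) (γ t₀)) (γ t₀) :=
    ((hΦ.fderiv_right (m := 1) (by norm_num)).differentiableAt (by norm_num)).hasFDerivAt
  have hderiv : deriv (Φ ∘ γ) =ᶠ[𝓝 t₀] fun t => fderiv ℝ Φ (γ t) (γ' t) :=
    hD.mono fun t ht => ht.deriv
  refine ⟨hD.self_of_nhds.deriv, ?_⟩
  rw [hderiv.deriv_eq]
  exact ((hD2.comp_hasDerivAt t₀ (hγ t₀)).clm_apply hγ').deriv

section InnerProductSpace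
variable {E : Type*} [NormedAddCommGroup E] [InnerProductSpace ℝ E]

/-- With `f = ‖w‖⁻¹ • w` and `a = ‖w‖`, for a unit vector `e ⊥ w` this is the great circle
through `e` with initial velocity `w` (the constant curve `e` when `w = 0`). -/
def trigCurve (e f : E) (a s : ℝ) : E := Real.cos (a * s) • e + Real.sin (a * s) • f

theorem trigCurve_zero (e f : E) (a : ℝ) : trigCurve e f a 0 = e := by
  simp [trigCurve]

theorem hasDerivAt_trigCurve (e f : E) (a s : ℝ) :
    HasDerivAt (trigCurve e f a) (a • trigCurve f (-e) a s) s := by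
  have hlin : HasDerivAt (fun s : ℝ => a * s) a s := by
    simpa using (hasDerivAt_id s).const_mul a
  have hcos := ((Real.hasDerivAt_cos (a * s)).comp s hlin).smul_const e
  have hsin := ((Real.hasDerivAt_sin (a * s)).comp s hlin).smul_const f
  have h : HasDerivAt (trigCurve e f a) _ s := hcos.add hsin
  convert h using 1
  simp only [trigCurve]
  module

theorem contDiff_trigCurve (e f : E) (a : ℝ) : ContDiff ℝ 2 (trigCurve e f a) := by
  unfold trigCurve
  fun_prop

theorem norm_smul_inv_norm_smul (w : E) : ‖w‖ • ‖w‖⁻¹ • w = w := by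
  rcases eq_or_ne w 0 with rfl | hw0
  · simp
  · exact smul_inv_smul₀ (norm_ne_zero_iff.2 hw0) w

theorem norm_trigCurve {e w : E} (he : ‖e‖ = 1) (hw : inner ℝ e w = 0) (s : ℝ) :
    ‖trigCurve e (‖w‖⁻¹ • w) ‖w‖ s‖ = 1 := by
  rcases eq_or_ne w 0 with rfl | hw0
  · simp [trigCurve, he]
  have hsq : ‖trigCurve e (‖w‖⁻¹ • w) ‖w‖ s‖ ^ 2 = 1 := by
    rw [trigCurve, norm_add_sq_real, norm_smul, norm_smul, norm_smul, real_inner_smul_left,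
      real_inner_smul_right, real_inner_smul_right, hw, he, norm_inv, norm_norm,
      inv_mul_cancel₀ (norm_ne_zero_iff.2 hw0)]
    simp only [Real.norm_eq_abs, sq_abs, mul_pow]
    linear_combination Real.sin_sq_add_cos_sq (‖w‖ * s)
  exact (pow_eq_one_iff_of_nonneg (norm_nonneg _) two_ne_zero).1 hsq

theorem trigCurve_velocity (e w : E) : ‖w‖ • trigCurve (‖w‖⁻¹ • w) (-e) ‖w‖ 0 = w := by
  rw [trigCurve_zero, norm_smul_inv_norm_smul]

theorem trigCurve_acceleration (e w : E) :
    ‖w‖ • ‖w‖ • trigCurve (-e) (-(‖w‖⁻¹ • w)) ‖w‖ 0 = -(‖w‖ ^ 2 • e) := by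
  rw [trigCurve_zero, smul_smul, sq, smul_neg]

theorem IsLocalMinOn.fderiv_eq_zero_and_le_of_sphere {Φ : E → ℝ} {t : ℝ} {e w : E}
    (hmin : IsLocalMinOn Φ (Metric.sphere 0 t) (t • e)) (hΦ : ContDiffAt ℝ 2 Φ (t • e))
    (ht : 0 < t) (he : ‖e‖ = 1) (hw : inner ℝ e w = 0) :
    fderiv ℝ Φ (t • e) w = 0 ∧
      fderiv ℝ Φ (t • e) e / t * ‖w‖ ^ 2 ≤ fderiv ℝ (fderiv ℝ Φ) (t • e) w w := by
  set γ : ℝ → E := fun s => t • trigCurve e (‖w‖⁻¹ • w) ‖w‖ s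
  have hγ (s : ℝ) : HasDerivAt γ (t • ‖w‖ • trigCurve (‖w‖⁻¹ • w) (-e) ‖w‖ s) s :=
    (hasDerivAt_trigCurve _ _ _ s).const_smul t
  have hγ' : HasDerivAt (fun s => t • ‖w‖ • trigCurve (‖w‖⁻¹ • w) (-e) ‖w‖ s)
      (t • ‖w‖ • ‖w‖ • trigCurve (-e) (-(‖w‖⁻¹ • w)) ‖w‖ 0) 0 :=
    ((hasDerivAt_trigCurve _ _ _ 0).const_smul ‖w‖).const_smul t
  have hγ0 : γ 0 = t • e := by simp [γ, trigCurve_zero]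
  have hγmem (s : ℝ) : γ s ∈ Metric.sphere 0 t := by
    simp [γ, norm_smul, norm_trigCurve he hw, abs_of_pos ht]
  have hγt : Tendsto γ (𝓝 0) (𝓝[Metric.sphere 0 t] (t • e)) :=
    tendsto_nhdsWithin_iff.2 ⟨hγ0 ▸ (hγ 0).continuousAt.tendsto, .of_forall hγmem⟩
  have hlocmin : IsLocalMin (Φ ∘ γ) 0 := by
    filter_upwards [hγt.eventually hmin] with s hs
    simpa [hγ0] using hs
  rw [← hγ0] at hΦ
  obtain ⟨h1, h2⟩ := hΦ.deriv_comp_curve hγ hγ'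
  have hfirst := h1 ▸ hlocmin.deriv_eq_zero
  have hsecond := h2 ▸ hlocmin.deriv_deriv_nonneg (hΦ.continuousAt.comp (hγ 0).continuousAt)
  rw [hγ0, trigCurve_velocity] at hfirst
  rw [hγ0, trigCurve_velocity, trigCurve_acceleration] at hsecond
  simp only [map_smul, map_neg, _root_.smul_apply, smul_eq_mul] at hfirst hsecond
  refine ⟨(mul_eq_zero.1 hfirst).resolve_left ht.ne', ?_⟩
  rw [div_mul_eq_mul_div, div_le_iff₀ ht]
  nlinarith

def spiral (e w : E) (t r : ℝ) : E := r • trigCurve e (‖w‖⁻¹ • w) ‖w‖ (r - t)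

theorem spiral_self (e w : E) (t : ℝ) : spiral e w t t = t • e := by
  rw [spiral, sub_self, trigCurve_zero]

theorem norm_spiral {e w : E} (he : ‖e‖ = 1) (hw : inner ℝ e w = 0) (t : ℝ) {r : ℝ}
    (hr : 0 ≤ r) : ‖spiral e w t r‖ = r := by
  rw [spiral, norm_smul, norm_trigCurve he hw, mul_one, Real.norm_of_nonneg hr]

theorem contDiff_spiral (e w : E) (t : ℝ) : ContDiff ℝ 2 (spiral e w t) :=
  contDiff_id.smul ((contDiff_trigCurve _ _ _).comp (contDiff_id.sub contDiff_const))

theorem ContDiffAt.deriv_comp_spiral {Φ : E → ℝ} {t : ℝ} {e w : E}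
    (hΦ : ContDiffAt ℝ 2 Φ (t • e)) :
    deriv (Φ ∘ spiral e w t) t = fderiv ℝ Φ (t • e) (e + t • w) ∧
    deriv (deriv (Φ ∘ spiral e w t)) t =
      fderiv ℝ (fderiv ℝ Φ) (t • e) (e + t • w) (e + t • w) +
        fderiv ℝ Φ (t • e) ((2 : ℝ) • w - (t * ‖w‖ ^ 2) • e) := by
  set c := trigCurve e (‖w‖⁻¹ • w) ‖w‖
  set c' := fun s => ‖w‖ • trigCurve (‖w‖⁻¹ • w) (-e) ‖w‖ s
  have hc (s : ℝ) : HasDerivAt c (c' s) s := hasDerivAt_trigCurve _ _ _ s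
  have hc' (s : ℝ) : HasDerivAt c' (‖w‖ • ‖w‖ • trigCurve (-e) (-(‖w‖⁻¹ • w)) ‖w‖ s) s :=
    (hasDerivAt_trigCurve _ _ _ s).const_smul ‖w‖
  have hγ (r : ℝ) : HasDerivAt (spiral e w t) (r • c' (r - t) + c (r - t)) r :=
    ((hasDerivAt_id r).smul ((hc (r - t)).comp_sub_const r t)).congr_deriv (by simp)
  have hγ' : HasDerivAt (fun r => r • c' (r - t) + c (r - t))
      (t • ‖w‖ • ‖w‖ • trigCurve (-e) (-(‖w‖⁻¹ • w)) ‖w‖ (t - t) + c' (t - t) + c' (t - t)) t :=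
    (((hasDerivAt_id t).smul ((hc' (t - t)).comp_sub_const t t)).add
      ((hc (t - t)).comp_sub_const t t)).congr_deriv (by simp [add_assoc])
  have hvel : t • c' (t - t) + c (t - t) = e + t • w := by
    simp only [c, c', sub_self, trigCurve_velocity, trigCurve_zero, add_comm]
  have hacc : t • ‖w‖ • ‖w‖ • trigCurve (-e) (-(‖w‖⁻¹ • w)) ‖w‖ (t - t) + c' (t - t) +
      c' (t - t) = (2 : ℝ) • w - (t * ‖w‖ ^ 2) • e := by
    simp only [c', sub_self, trigCurve_velocity, trigCurve_acceleration]
    module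
  rw [← spiral_self e w t] at hΦ
  obtain ⟨h1, h2⟩ := hΦ.deriv_comp_curve hγ hγ'
  rw [spiral_self, hvel] at h1
  rw [spiral_self, hvel, hacc] at h2
  exact ⟨h1, h2⟩

theorem hasFDerivAt_norm_of_ne_zero {x : E} (hx : x ≠ 0) :
    HasFDerivAt (‖·‖) (‖x‖⁻¹ • innerSL ℝ x) x := by
  have h := (hasStrictFDerivAt_norm_sq x).hasFDerivAt.sqrt (by positivity)
  simp only [Real.sqrt_sq (norm_nonneg _)] at h
  convert h using 1
  ext v
  simp
  field_simp

theorem hasFDerivAt_comp_norm {φ : ℝ → ℝ} {x : E} (hx : x ≠ 0)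
    (hφ : DifferentiableAt ℝ φ ‖x‖) :
    HasFDerivAt (fun y => φ ‖y‖) ((deriv φ ‖x‖ / ‖x‖) • innerSL ℝ x) x := by
  refine (hφ.hasDerivAt.comp_hasFDerivAt x (hasFDerivAt_norm_of_ne_zero hx)).congr_fderiv ?_
  rw [smul_smul, div_eq_mul_inv]

theorem fderiv_fderiv_comp_norm {φ : ℝ → ℝ} {x : E} (hx : x ≠ 0)
    (hφ : ContDiffAt ℝ 2 φ ‖x‖) (v w : E) :
    fderiv ℝ (fderiv ℝ fun y => φ ‖y‖) x v w =
      deriv φ ‖x‖ / ‖x‖ * inner ℝ v w +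
        (deriv (deriv φ) ‖x‖ - deriv φ ‖x‖ / ‖x‖) / ‖x‖ ^ 2 * inner ℝ x v * inner ℝ x w := by
  have hfd : fderiv ℝ (fun y => φ ‖y‖) =ᶠ[𝓝 x]
      fun y => (deriv φ ‖y‖ / ‖y‖) • innerSL ℝ y := by
    have hdiff : ∀ᶠ y in 𝓝 x, DifferentiableAt ℝ φ ‖y‖ :=
      continuous_norm.continuousAt.eventually
        (hφ.eventually (by simp) |>.mono fun r hr => hr.differentiableAt (by norm_num))
    filter_upwards [hdiff, eventually_ne_nhds hx] with y hy hy0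
    exact (hasFDerivAt_comp_norm hy0 hy).fderiv
  have hg : HasDerivAt (fun r => deriv φ r / r)
      ((deriv (deriv φ) ‖x‖ * ‖x‖ - deriv φ ‖x‖ * 1) / ‖x‖ ^ 2) ‖x‖ :=
    hφ.hasDerivAt_deriv.div (hasDerivAt_id _) (norm_ne_zero_iff.2 hx)
  have hfd' : HasFDerivAt (fun y => (deriv φ ‖y‖ / ‖y‖) • innerSL ℝ y) _ x :=
    (hg.comp_hasFDerivAt x (hasFDerivAt_norm_of_ne_zero hx)).smul (innerSL ℝ).hasFDerivAt
  rw [hfd.fderiv_eq, hfd'.fderiv]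
  simp [innerSL_apply_apply]
  field_simp
  rw [innerSL_apply_apply]

theorem exists_isMinOn_perp [FiniteDimensional ℝ E] (B : E →L[ℝ] E →L[ℝ] ℝ) (e : E)
    {c ε : ℝ} (hε : 0 < ε) (hpos : ∀ w, inner ℝ e w = 0 → c * ‖w‖ ^ 2 ≤ B w w) :
    ∃ v, inner ℝ e v = 0 ∧ IsMinOn (fun u => B (e + u) (e + u) + (ε - c) * ‖u‖ ^ 2)
      {u | inner ℝ e u = 0} v := by
  set s : Set E := {u | inner ℝ e u = 0}
  set f : E → ℝ := fun u => B (e + u) (e + u) + (ε - c) * ‖u‖ ^ 2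
  have hcoercive : ∀ᶠ u in cocompact E ⊓ 𝓟 s, f 0 ≤ f u := by
    have hlarge : ∀ᶠ u in cocompact E ⊓ 𝓟 s, 2 * ‖B‖ * ‖e‖ / ε ≤ ‖u‖ :=
      (tendsto_norm_cocompact_atTop.eventually (eventually_ge_atTop _)).filter_mono inf_le_left
    filter_upwards [hlarge, mem_inf_of_right (mem_principal_self s)] with u hu hus
    have h1 := abs_le.1 ((Real.norm_eq_abs _).symm.trans_le (B.le_opNorm₂ e u))
    have h2 := abs_le.1 ((Real.norm_eq_abs _).symm.trans_le (B.le_opNorm₂ u e))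
    rw [div_le_iff₀ hε] at hu
    simp only [f, map_add, _root_.add_apply, map_zero, _root_.zero_apply, add_zero,
      norm_zero]
    nlinarith [hpos u hus, mul_le_mul_of_nonneg_left hu (norm_nonneg u)]
  exact (by fun_prop : Continuous f).continuousOn.exists_isMinOn'
    (isClosed_eq (by fun_prop) (by fun_prop)) (show (0 : E) ∈ s by simp [s]) hcoercive

/-- Writing `y = α (e + u)` with `u ⊥ e` reduces this Schur complement estimate to the
minimality of `v`. -/
theorem quadratic_le_of_isMinOn_perp (B : E →L[ℝ] E →L[ℝ] ℝ) {e v : E} (he : ‖e‖ = 1)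
    {c ε : ℝ} (hε : 0 ≤ ε) (hpos : ∀ w, inner ℝ e w = 0 → c * ‖w‖ ^ 2 ≤ B w w)
    (hmin : IsMinOn (fun u => B (e + u) (e + u) + (ε - c) * ‖u‖ ^ 2) {u | inner ℝ e u = 0} v)
    (y : E) :
    (B (e + v) (e + v) - c * ‖v‖ ^ 2) * inner ℝ e y ^ 2 ≤
      B y y + (ε - c) * (‖y‖ ^ 2 - inner ℝ e y ^ 2) := by
  set α := inner ℝ e y
  obtain ⟨w, hw, hy⟩ : ∃ w, inner ℝ e w = 0 ∧ y = α • e + w :=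
    ⟨y - α • e, by simp [α, inner_sub_right, real_inner_smul_right, he], by abel⟩
  have hnorm : ‖y‖ ^ 2 - α ^ 2 = ‖w‖ ^ 2 := by
    rw [hy, norm_add_sq_real, real_inner_smul_left, hw, norm_smul, he]
    simp
  rw [hnorm]
  clear_value α
  subst hy
  rcases eq_or_ne α 0 with rfl | hα
  · simp only [zero_smul, zero_add]
    nlinarith [hpos w hw, sq_nonneg ‖w‖]
  have hsplit : α • e + w = α • (e + α⁻¹ • w) := by simp [smul_add, smul_smul, hα]
  have hw' : ‖w‖ ^ 2 = α ^ 2 * ‖α⁻¹ • w‖ ^ 2 := by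
    rw [norm_smul, mul_pow, Real.norm_eq_abs, sq_abs, inv_pow,
      mul_inv_cancel_left₀ (pow_ne_zero 2 hα)]
  have hvu : B (e + v) (e + v) + (ε - c) * ‖v‖ ^ 2 ≤
      B (e + α⁻¹ • w) (e + α⁻¹ • w) + (ε - c) * ‖α⁻¹ • w‖ ^ 2 :=
    hmin (show α⁻¹ • w ∈ {u | inner ℝ e u = 0} by simp [inner_smul_right, hw])
  rw [hsplit, hw']
  simp only [map_smul, _root_.smul_apply, smul_eq_mul]
  nlinarith [mul_nonneg (sq_nonneg α) (mul_nonneg hε (sq_nonneg ‖v‖))]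

end InnerProductSpace

section EuclideanSpace
variable {n : ℕ}

theorem hess_apply (φ : EucSp n → ℝ) (x : EucSp n) (i j : Fin n) :
    hess φ x i j = fderiv ℝ (fderiv ℝ φ) x (EuclideanSpace.single i 1)
      (EuclideanSpace.single j 1) := by
  simp [hess, iteratedFDeriv_two_apply]

theorem hess_transpose {φ : EucSp n → ℝ} {x : EucSp n} (hφ : ContDiffAt ℝ 2 φ x) :
    (hess φ x)ᵀ = hess φ x := by
  ext i j
  rw [transpose_apply, hess_apply, hess_apply, (hφ.isSymmSndFDerivAt (by simp)).eq]

theorem hess_eq_toMatrix₂ (φ : EucSp n → ℝ) (x : EucSp n) :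
    hess φ x = LinearMap.toMatrix₂ (EuclideanSpace.basisFun (Fin n) ℝ).toBasis
      (EuclideanSpace.basisFun (Fin n) ℝ).toBasis
      ((ContinuousLinearMap.coeLM ℝ).comp (fderiv ℝ (fderiv ℝ φ) x).toLinearMap) := by
  ext i j
  simp [hess_apply]

theorem dotProduct_hess_mulVec (φ : EucSp n → ℝ) (x v w : EucSp n) :
    WithLp.ofLp v ⬝ᵥ hess φ x *ᵥ WithLp.ofLp w = fderiv ℝ (fderiv ℝ φ) x v w := by
  have hrepr (u : EucSp n) : (EuclideanSpace.basisFun (Fin n) ℝ).repr.symm u = u :=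
    (LinearIsometryEquiv.symm_apply_eq _).2 (by ext; simp)
  rw [hess_eq_toMatrix₂]
  simpa [hrepr] using dotProduct_toMatrix₂_mulVec (σ₁ := RingHom.id ℝ) (σ₂ := RingHom.id ℝ)
    (EuclideanSpace.basisFun (Fin n) ℝ).toBasis (EuclideanSpace.basisFun (Fin n) ℝ).toBasis
    ((ContinuousLinearMap.coeLM ℝ).comp (fderiv ℝ (fderiv ℝ φ) x).toLinearMap)
    (WithLp.ofLp v) (WithLp.ofLp w)

theorem dotProduct_projMat_mulVec (e y : EucSp n) :
    WithLp.ofLp y ⬝ᵥ projMat e *ᵥ WithLp.ofLp y = inner ℝ e y ^ 2 := by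
  have hvec : projMat e = vecMulVec (WithLp.ofLp e) (WithLp.ofLp e) := rfl
  rw [hvec, vecMulVec_mulVec]
  simp [EuclideanSpace.inner_eq_star_dotProduct, dotProduct_comm, sq]

theorem dotProduct_one_mulVec (y : EucSp n) :
    WithLp.ofLp y ⬝ᵥ (1 : Matrix (Fin n) (Fin n) ℝ) *ᵥ WithLp.ofLp y = ‖y‖ ^ 2 := by
  rw [one_mulVec, ← real_inner_self_eq_norm_sq, EuclideanSpace.inner_eq_star_dotProduct]
  simp

theorem projMat_transpose (e : EucSp n) : (projMat e)ᵀ = projMat e := by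
  ext i j
  simp [projMat, mul_comm]

theorem posSemidef_of_dotProduct_mulVec_nonneg {X : Matrix (Fin n) (Fin n) ℝ} (hX : Xᵀ = X)
    (h : ∀ y : EucSp n, 0 ≤ WithLp.ofLp y ⬝ᵥ X *ᵥ WithLp.ofLp y) : X.PosSemidef :=
  posSemidef_iff_dotProduct_mulVec.2 ⟨hX, fun x => by simpa using h (WithLp.toLp 2 x)⟩

theorem hess_comp_norm {φ : ℝ → ℝ} {t : ℝ} (ht : 0 < t) (hφ : ContDiffAt ℝ 2 φ t)
    {e : EucSp n} (he : ‖e‖ = 1) :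
    hess (fun x => φ ‖x‖) (t • e) =
      (deriv φ t / t) • (1 - projMat e) + deriv (deriv φ) t • projMat e := by
  have hnorm : ‖t • e‖ = t := by rw [norm_smul, he, mul_one, Real.norm_of_nonneg ht.le]
  have hx : t • e ≠ 0 := by rw [← norm_ne_zero_iff, hnorm]; exact ht.ne'
  ext i j
  rw [hess_apply, fderiv_fderiv_comp_norm hx (by rwa [hnorm]), hnorm]
  rcases eq_or_ne i j with rfl | hij
  · simp [EuclideanSpace.inner_single_right, projMat]
    field_simp
    ring
  · simp [EuclideanSpace.inner_single_right, projMat, hij, Ne.symm hij]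
    field_simp
    ring

variable {F : Set (Matrix (Fin n) (Fin n) ℝ)}

theorem IsSubequation.hess_mem (hF : IsSubequation F) {Φ : EucSp n → ℝ} {x : EucSp n}
    (hΦ : ContDiffAt ℝ 2 Φ x) {e : EucSp n} (he : ‖e‖ = 1) {c : ℝ}
    (hpos : ∀ w, inner ℝ e w = 0 → c * ‖w‖ ^ 2 ≤ fderiv ℝ (fderiv ℝ Φ) x w w)
    (hmem : ∀ v, inner ℝ e v = 0 → c • (1 - projMat e) +
      (fderiv ℝ (fderiv ℝ Φ) x (e + v) (e + v) - c * ‖v‖ ^ 2) • projMat e ∈ F) :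
    hess Φ x ∈ F := by
  obtain ⟨-, hclosed, hmono⟩ := hF
  have hpert (ε : ℝ) (hε : 0 < ε) : hess Φ x + ε • (1 - projMat e) ∈ F := by
    obtain ⟨v, hv, hmin⟩ := exists_isMinOn_perp (fderiv ℝ (fderiv ℝ Φ) x) e hε hpos
    set A := c • (1 - projMat e) +
      (fderiv ℝ (fderiv ℝ Φ) x (e + v) (e + v) - c * ‖v‖ ^ 2) • projMat e
    have hpsd : (hess Φ x + ε • (1 - projMat e) - A).PosSemidef := by
      refine posSemidef_of_dotProduct_mulVec_nonneg ?_ fun y => ?_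
      · simp [A, hess_transpose hΦ, projMat_transpose]
      · simp only [A, sub_mulVec, add_mulVec, smul_mulVec, dotProduct_sub, dotProduct_add,
          dotProduct_smul, smul_eq_mul, dotProduct_hess_mulVec, dotProduct_projMat_mulVec,
          dotProduct_one_mulVec]
        linarith [quadratic_le_of_isMinOn_perp _ he hε.le hpos hmin y]
    simpa using hmono A (hmem v hv) _ hpsd
  have hlim : Tendsto (fun ε : ℝ => hess Φ x + ε • (1 - projMat e)) (𝓝[>] 0)
      (𝓝 (hess Φ x)) := by
    have hcont : Continuous fun ε : ℝ => hess Φ x + ε • (1 - projMat e) := by fun_prop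
    simpa using (hcont.tendsto 0).mono_left nhdsWithin_le_nhds
  exact hclosed.mem_of_tendsto hlim (eventually_mem_nhdsWithin.mono hpert)

variable {I : Set ℝ} {ψ : ℝ → EReal}

theorem IsFSubharmonicOn.isRadialSubharmonicOn (hn : 1 ≤ n) (hI : I ⊆ Ioi 0)
    (hu : IsFSubharmonicOn F {x : EucSp n | ‖x‖ ∈ I} (fun x => ψ ‖x‖)) :
    IsRadialSubharmonicOn F I ψ := by
  obtain ⟨husc, hlt, htest⟩ := hu
  have hnorm {t : ℝ} (ht : t ∈ I) {e : EucSp n} (he : ‖e‖ = 1) : ‖t • e‖ = t := by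
    rw [norm_smul, he, mul_one, Real.norm_of_nonneg (hI ht).le]
  obtain ⟨e₀, he₀⟩ : ∃ e₀ : EucSp n, ‖e₀‖ = 1 := ⟨EuclideanSpace.single ⟨0, hn⟩ 1, by simp⟩
  have hmaps : MapsTo (· • e₀) I {x : EucSp n | ‖x‖ ∈ I} := fun t ht => by
    show ‖t • e₀‖ ∈ I
    rwa [hnorm ht he₀]
  refine ⟨fun t ht y hy => ?_, fun t ht => hnorm ht he₀ ▸ hlt _ (hmaps ht),
    fun t ht φ hφ hle heq e he => ?_⟩
  · have hcomp := husc.comp (continuous_id.smul continuous_const).continuousOn hmaps t ht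
    filter_upwards [hcomp y (by simpa [hnorm ht he₀] using hy), self_mem_nhdsWithin]
      with s hs hsI
    simpa [hnorm hsI he₀] using hs
  · have hx : t • e ≠ 0 := by rw [← norm_ne_zero_iff, hnorm ht he]; exact (hI ht).ne'
    have hnormt : Tendsto (‖·‖) (𝓝[{x : EucSp n | ‖x‖ ∈ I}] (t • e)) (𝓝[I] t) := by
      have h := (continuous_norm.continuousWithinAt (s := {x : EucSp n | ‖x‖ ∈ I})
        (x := t • e)).tendsto_nhdsWithin fun _ hx => hx
      rwa [hnorm ht he] at h
    rw [← hess_comp_norm (hI ht) hφ he]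
    refine htest (t • e) (by simpa [hnorm ht he]) _
      ((hnorm ht he ▸ hφ).comp _ (contDiffAt_norm ℝ hx)) (hnormt.eventually hle) ?_
    simpa [hnorm ht he] using heq

theorem IsRadialSubharmonicOn.spiral_mem_radialFiber (hψ : IsRadialSubharmonicOn F I ψ)
    (hI : I ⊆ Ioi 0) {Φ : EucSp n → ℝ} {t : ℝ} (ht : t ∈ I) {e w : EucSp n} (he : ‖e‖ = 1)
    (hw : inner ℝ e w = 0) (hΦ : ContDiffAt ℝ 2 Φ (t • e))
    (hle : ∀ᶠ x in 𝓝[{x : EucSp n | ‖x‖ ∈ I}] (t • e), ψ ‖x‖ ≤ Φ x)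
    (heq : ψ t = Φ (t • e)) :
    (fderiv ℝ Φ (t • e) (e + t • w),
      fderiv ℝ (fderiv ℝ Φ) (t • e) (e + t • w) (e + t • w) +
        fderiv ℝ Φ (t • e) ((2 : ℝ) • w - (t * ‖w‖ ^ 2) • e)) ∈ radialFiber F t := by
  obtain ⟨h1, h2⟩ := hΦ.deriv_comp_spiral (w := w)
  rw [← h1, ← h2]
  have hnorm {r : ℝ} (hr : r ∈ I) : ‖spiral e w t r‖ = r := norm_spiral he hw t (hI hr).le
  have hspiral : Tendsto (spiral e w t) (𝓝[I] t) (𝓝[{x : EucSp n | ‖x‖ ∈ I}] (t • e)) := by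
    refine tendsto_nhdsWithin_iff.2 ⟨?_, eventually_mem_nhdsWithin.mono fun r hr => ?_⟩
    · rw [← spiral_self e w t]
      exact (contDiff_spiral e w t).continuous.continuousAt.tendsto.mono_left nhdsWithin_le_nhds
    · show ‖spiral e w t r‖ ∈ I
      rwa [hnorm hr]
  refine hψ.2.2 t ht _ ((spiral_self e w t ▸ hΦ).comp t (contDiff_spiral e w t).contDiffAt) ?_
    (by rwa [Function.comp_apply, spiral_self])
  filter_upwards [hspiral.eventually hle, self_mem_nhdsWithin] with r hr hrI
  rwa [hnorm hrI] at hr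

theorem IsRadialSubharmonicOn.isFSubharmonicOn (hF : IsSubequation F) (hI : I ⊆ Ioi 0)
    (hψ : IsRadialSubharmonicOn F I ψ) :
    IsFSubharmonicOn F {x : EucSp n | ‖x‖ ∈ I} (fun x => ψ ‖x‖) := by
  refine ⟨hψ.1.comp continuous_norm.continuousOn fun _ hx => hx, fun x hx => hψ.2.1 _ hx,
    fun x hx Φ hΦ hle heq => ?_⟩
  obtain ⟨t, e, ht, he, rfl⟩ : ∃ (t : ℝ) (e : EucSp n), 0 < t ∧ ‖e‖ = 1 ∧ x = t • e := by
    have hx0 : 0 < ‖x‖ := hI hx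
    exact ⟨‖x‖, ‖x‖⁻¹ • x, hx0, by simp [norm_smul, hx0.ne'], by simp [smul_smul, hx0.ne']⟩
  have hnorm : ‖t • e‖ = t := by rw [norm_smul, he, mul_one, Real.norm_of_nonneg ht.le]
  have htI : t ∈ I := hnorm ▸ hx
  have heq' : ψ t = Φ (t • e) := by simpa only [hnorm] using heq
  have hmin : IsLocalMinOn Φ (Metric.sphere 0 t) (t • e) := by
    have hsub : Metric.sphere (0 : EucSp n) t ⊆ {x | ‖x‖ ∈ I} := fun x hx => by
      show ‖x‖ ∈ I
      rwa [mem_sphere_zero_iff_norm.1 hx]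
    filter_upwards [nhdsWithin_mono _ hsub hle, self_mem_nhdsWithin] with x hx hxs
    rw [mem_sphere_zero_iff_norm.1 hxs, heq'] at hx
    exact EReal.coe_le_coe_iff.1 hx
  have htangent {w : EucSp n} (hw : inner ℝ e w = 0) :=
    hmin.fderiv_eq_zero_and_le_of_sphere hΦ ht he hw
  refine hF.hess_mem hΦ he (fun w hw => (htangent hw).2) fun v hv => ?_
  have hw : inner ℝ e (t⁻¹ • v) = 0 := by simp [inner_smul_right, hv]
  have hmem := hψ.spiral_mem_radialFiber hI htI he hw hΦ hle heq' e he
  rw [smul_inv_smul₀ ht.ne'] at hmem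
  simp only [map_add, map_sub, map_smul, (htangent hw).1, (htangent hv).1, smul_eq_mul,
    mul_zero, add_zero, zero_sub] at hmem
  convert hmem using 3
  simp only [map_add, _root_.add_apply]
  rw [norm_smul, Real.norm_of_nonneg (inv_nonneg.2 ht.le)]
  field_simp
  ring

end EuclideanSpace

theorem stmt1_general (n : ℕ) (hn : 1 ≤ n)
    (F : Set (Matrix (Fin n) (Fin n) ℝ)) (hF : IsSubequation F)
    (I : Set ℝ) (hIsub : I ⊆ Set.Ioi (0 : ℝ))
    (ψ : ℝ → EReal) :
    IsFSubharmonicOn F {x : EucSp n | ‖x‖ ∈ I} (fun x => ψ ‖x‖) ↔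
      IsRadialSubharmonicOn F I ψ :=
  ⟨fun hu => hu.isRadialSubharmonicOn hn hIsub, fun hψ => hψ.isFSubharmonicOn hF hIsub⟩

/-- Radial subharmonics: `u(x) = ψ(|x|)` is `F`-subharmonic on the annulus
`{x : |x| ∈ I}` if and only if `ψ` is `R_F`-subharmonic on `I`. -/
theorem stmt1 (n : ℕ) (hn : 1 ≤ n)
    (F : Set (Matrix (Fin n) (Fin n) ℝ)) (hF : IsSubequation F)
    (I : Set ℝ) (hIopen : IsOpen I) (hIsub : I ⊆ Set.Ioi (0 : ℝ))
    (hIconn : I.OrdConnected) (ψ : ℝ → EReal) :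
    IsFSubharmonicOn F {x : EucSp n | ‖x‖ ∈ I} (fun x => ψ ‖x‖) ↔
      IsRadialSubharmonicOn F I ψ :=
  stmt1_general n hn F hF I hIsub ψ

end
end

section
/- Let F ⊆ Sym²(ℝⁿ) be an ST-invariant cone subequation with finite Riesz characteristic p. Then for every t > 0, every λ ≥ 0, every a ∈ ℝ, and every unit vector e ∈ ℝⁿ: (λ/t)·P_{e⊥} + a·P_e ∈ F if and only if a + ((p−1)/t)·λ ≥ 0. (Equivalently, the increasing radial subequation R_F ∩ {λ ≥ 0} of F coincides with R_p^↑ = {(λ, a) : a + ((p−1)/t)·λ ≥ 0 and λ ≥ 0}.) -/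
open Set Filter Topology Matrix

noncomputable section

/-- A cone subequation. -/
def IsConeSubequation {n : ℕ} (F : Set (Matrix (Fin n) (Fin n) ℝ)) : Prop :=
  IsSubequation F ∧ ∀ A ∈ F, ∀ t : ℝ, 0 ≤ t → t • A ∈ F

/-- `F` is invariant under a closed subgroup of `O(n)` acting transitively on the
unit sphere. -/
def STInvariant {n : ℕ} (F : Set (Matrix (Fin n) (Fin n) ℝ)) : Prop :=
  ∃ G : Set (Matrix (Fin n) (Fin n) ℝ),
    IsClosed G ∧
    G ⊆ (Matrix.orthogonalGroup (Fin n) ℝ : Set (Matrix (Fin n) (Fin n) ℝ)) ∧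
    (1 : Matrix (Fin n) (Fin n) ℝ) ∈ G ∧
    (∀ g ∈ G, ∀ h ∈ G, g * h ∈ G) ∧
    (∀ g ∈ G, g⁻¹ ∈ G) ∧
    (∀ x y : EucSp n, ‖x‖ = 1 → ‖y‖ = 1 → ∃ g ∈ G, Matrix.toEuclideanLin g x = y) ∧
    (∀ g ∈ G, ∀ A ∈ F, gᵀ * A * g ∈ F)

/-- The interior of `F` relative to the subspace `Sym²(ℝⁿ)` of symmetric matrices. -/
def symInterior {n : ℕ} (F : Set (Matrix (Fin n) (Fin n) ℝ)) :
    Set (Matrix (Fin n) (Fin n) ℝ) :=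
  {A | ∃ U ∈ 𝓝 A, ∀ B ∈ U, B.IsSymm → B ∈ F}

/-- The frontier of `F` relative to the subspace `Sym²(ℝⁿ)` of symmetric matrices. -/
def symFrontier {n : ℕ} (F : Set (Matrix (Fin n) (Fin n) ℝ)) :
    Set (Matrix (Fin n) (Fin n) ℝ) :=
  closure F \ symInterior F

/-- `F` has finite (increasing) Riesz characteristic `p`:
`P_{e⊥} − (p−1) P_e ∈ ∂F` for every unit vector `e`. -/
def HasRieszChar {n : ℕ} (F : Set (Matrix (Fin n) (Fin n) ℝ)) (p : ℝ) : Prop :=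
  1 ≤ p ∧ ∀ e : EucSp n, ‖e‖ = 1 →
    ((1 : Matrix (Fin n) (Fin n) ℝ) - projMat e) - (p - 1) • projMat e ∈ symFrontier F

/-- `F` has finite decreasing Riesz characteristic `q`:
`−P_{e⊥} + (q−1) P_e ∈ ∂F` for every unit vector `e`. -/
def HasDualRieszChar {n : ℕ} (F : Set (Matrix (Fin n) (Fin n) ℝ)) (q : ℝ) : Prop :=
  1 ≤ q ∧ ∀ e : EucSp n, ‖e‖ = 1 →
    -((1 : Matrix (Fin n) (Fin n) ℝ) - projMat e) + (q - 1) • projMat e ∈ symFrontier F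

/-- The dual subequation `F̃ = {A : −A ∉ Int F}` (interior relative to `Sym²(ℝⁿ)`). -/
def dualSubeq {n : ℕ} (F : Set (Matrix (Fin n) (Fin n) ℝ)) :
    Set (Matrix (Fin n) (Fin n) ℝ) :=
  {A | A.IsSymm ∧ -A ∉ symInterior F}

/-- `u` is `F`-harmonic on `X`: `u` is `F`-subharmonic and `−u` is `F̃`-subharmonic. -/
def IsFHarmonicOn {n : ℕ} (F : Set (Matrix (Fin n) (Fin n) ℝ))
    (X : Set (EucSp n)) (u : EucSp n → ℝ) : Prop :=
  IsFSubharmonicOn F X (fun x => ((u x : ℝ) : EReal)) ∧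
  IsFSubharmonicOn (dualSubeq F) X (fun x => ((-(u x) : ℝ) : EReal))

/-- The Riesz kernel `K_p`. -/
def rieszKernel (p t : ℝ) : ℝ :=
  if p < 2 then t ^ (2 - p) else if p = 2 then Real.log t else -(t ^ (2 - p))

/-!
Write `μ = λ/t ≥ 0`. Since `F` is closed, the Riesz matrix `B = P_{e⊥} − (p−1) P_e` lies in `F`.
If `a + (p−1) μ ≥ 0`, then `μ P_{e⊥} + a P_e = μ B + (a + (p−1) μ) P_e` lies in `F` by the cone
property and positivity. Conversely, if `A = μ P_{e⊥} + a P_e ∈ F` with `a + (p−1) μ < 0`, then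
`B = s A + m I` with `s = p / (μ − a) ≥ 0` and `m = −(a + (p−1) μ) / (μ − a) > 0`. As `s A ∈ F`
and every symmetric matrix within operator-norm distance `m` of `m I` is positive semidefinite,
`B` would lie in the relative interior of `F`, contradicting `B ∈ ∂F`.
-/

namespace Matrix

open scoped Matrix.Norms.L2Operator

variable {ι : Type*} [Fintype ι] [DecidableEq ι]

theorem abs_dotProduct_mulVec_le (E : Matrix ι ι ℝ) (x : ι → ℝ) :
    |x ⬝ᵥ E *ᵥ x| ≤ ‖E‖ * (x ⬝ᵥ x) := by
  have hinner (y z : ι → ℝ) : inner ℝ (WithLp.toLp 2 y) (WithLp.toLp 2 z) = y ⬝ᵥ z := by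
    rw [EuclideanSpace.inner_toLp_toLp, star_trivial, dotProduct_comm]
  have hnorm : ‖WithLp.toLp 2 x‖ * ‖WithLp.toLp 2 x‖ = x ⬝ᵥ x := by
    rw [← real_inner_self_eq_norm_mul_norm, hinner]
  calc |x ⬝ᵥ E *ᵥ x| ≤ ‖WithLp.toLp 2 x‖ * ‖WithLp.toLp 2 (E *ᵥ x)‖ :=
        hinner x _ ▸ abs_real_inner_le_norm _ _
    _ ≤ ‖WithLp.toLp 2 x‖ * (‖E‖ * ‖WithLp.toLp 2 x‖) := by
        gcongr; exact E.l2_opNorm_mulVec (WithLp.toLp 2 x)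
    _ = ‖E‖ * (x ⬝ᵥ x) := by rw [← hnorm]; ring

theorem posSemidef_smul_one_add {E : Matrix ι ι ℝ} (hE : E.IsSymm) {m : ℝ} (hm : ‖E‖ ≤ m) :
    (m • 1 + E).PosSemidef := by
  refine .of_dotProduct_mulVec_nonneg
    (isHermitian_iff_isSymm.mpr ((isSymm_one.smul m).add hE)) fun x => ?_
  rw [star_trivial, add_mulVec, dotProduct_add, smul_mulVec, one_mulVec, dotProduct_smul,
    smul_eq_mul]
  have hx : 0 ≤ x ⬝ᵥ x := by simpa using dotProduct_star_self_nonneg x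
  nlinarith [abs_dotProduct_mulVec_le E x, neg_abs_le (x ⬝ᵥ E *ᵥ x)]

end Matrix

section

variable {n : ℕ} {F : Set (Matrix (Fin n) (Fin n) ℝ)} {p μ a : ℝ} {e : EucSp n}

theorem posSemidef_projMat (e : EucSp n) : (projMat e).PosSemidef :=
  posSemidef_vecMulVec_self_star e.ofLp

open scoped Matrix.Norms.L2Operator in
theorem add_smul_one_mem_symInterior (hF : IsSubequation F) {A : Matrix (Fin n) (Fin n) ℝ}
    (hA : A ∈ F) {m : ℝ} (hm : 0 < m) : A + m • 1 ∈ symInterior F := by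
  refine ⟨Metric.ball (A + m • 1) m, Metric.ball_mem_nhds _ hm, fun B hB hBsymm => ?_⟩
  have hE : (B - (A + m • 1)).IsSymm := hBsymm.sub ((hF.1 A hA).add (isSymm_one.smul m))
  have hnorm : ‖B - (A + m • 1)‖ ≤ m := (dist_eq_norm B _ ▸ Metric.mem_ball.mp hB).le
  convert hF.2.2 A hA _ (posSemidef_smul_one_add hE hnorm) using 1
  abel

theorem smul_add_smul_projMat_mem (hF : IsConeSubequation F)
    (hB : (1 - projMat e) - (p - 1) • projMat e ∈ F) (hμ : 0 ≤ μ) (ha : 0 ≤ a + (p - 1) * μ) :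
    μ • (1 - projMat e) + a • projMat e ∈ F := by
  convert hF.1.2.2 _ (hF.2 _ hB μ hμ) _ ((posSemidef_projMat e).smul ha) using 1
  module

theorem sub_smul_projMat_mem_symInterior (hF : IsConeSubequation F) (hp : 0 ≤ p) (hμ : 0 ≤ μ)
    (hA : μ • (1 - projMat e) + a • projMat e ∈ F) (ha : a + (p - 1) * μ < 0) :
    (1 - projMat e) - (p - 1) • projMat e ∈ symInterior F := by
  have hd : 0 < μ - a := by nlinarith
  set s := p / (μ - a)
  set m := -(a + (p - 1) * μ) / (μ - a)
  have hQ : s * μ + m = 1 := by simp only [s, m]; field_simp; ring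
  have hP : s * a + m = -(p - 1) := by simp only [s, m]; field_simp; ring
  have hB : (1 - projMat e) - (p - 1) • projMat e =
      s • (μ • (1 - projMat e) + a • projMat e) + m • 1 :=
    calc (1 - projMat e) - (p - 1) • projMat e
        = (s * μ + m) • (1 - projMat e) + (s * a + m) • projMat e := by rw [hQ, hP]; module
      _ = _ := by module
  rw [hB]
  exact add_smul_one_mem_symInterior hF.1 (hF.2 _ hA s (div_nonneg hp hd.le))
    (div_pos (by linarith) hd)

end

theorem stmt2_general (n : ℕ) (p : ℝ)
    (F : Set (Matrix (Fin n) (Fin n) ℝ))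
    (hF : IsConeSubequation F) (hchar : HasRieszChar F p) :
    ∀ t : ℝ, 0 < t → ∀ lam : ℝ, 0 ≤ lam → ∀ a : ℝ, ∀ e : EucSp n, ‖e‖ = 1 →
      ((lam / t) • ((1 : Matrix (Fin n) (Fin n) ℝ) - projMat e) + a • projMat e ∈ F ↔
        0 ≤ a + ((p - 1) / t) * lam) := by
  intro t ht lam hlam a e he
  obtain ⟨hp, hfront⟩ := hchar
  have hB := hF.1.2.1.closure_eq ▸ (hfront e he).1
  have hμ : 0 ≤ lam / t := div_nonneg hlam ht.le
  rw [div_mul_eq_mul_div, mul_div_assoc]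
  refine ⟨fun hA => ?_, smul_add_smul_projMat_mem hF hB hμ⟩
  by_contra! ha
  exact (hfront e he).2 (sub_smul_projMat_mem_symInterior hF (by linarith) hμ hA ha)

/-- For an ST-invariant cone subequation `F` with finite Riesz characteristic `p`,
the increasing radial subequation of `F` is `R_p^↑`. -/
theorem stmt2 (n : ℕ) (p : ℝ)
    (F : Set (Matrix (Fin n) (Fin n) ℝ))
    (hF : IsConeSubequation F) (hST : STInvariant F) (hchar : HasRieszChar F p) :
    ∀ t : ℝ, 0 < t → ∀ lam : ℝ, 0 ≤ lam → ∀ a : ℝ, ∀ e : EucSp n, ‖e‖ = 1 →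
      ((lam / t) • ((1 : Matrix (Fin n) (Fin n) ℝ) - projMat e) + a • projMat e ∈ F ↔
        0 ≤ a + ((p - 1) / t) * lam) :=
  stmt2_general n p F hF hchar

end
end

section
/- Let n ≥ 2 and 1 ≤ p < ∞. For A ∈ Sym²(ℝⁿ) let λ₁(A) ≤ ⋯ ≤ λₙ(A) denote its ordered eigenvalues, and define 𝒫_p^{min/2} = {A : λ₁(A) + (p−1)λ₂(A) ≥ 0} and 𝒫_p^{min/max} = {A : λ₁(A) + (p−1)λₙ(A) ≥ 0}. Let F ⊆ Sym²(ℝⁿ) be an ST-invariant cone subequation. Then F has finite increasing Riesz characteristic p (i.e. P_{e⊥} − (p−1)P_e ∈ ∂F for every unit e) if and only if 𝒫_p^{min/2} ⊆ F ⊆ 𝒫_p^{min/max}. In particular, both 𝒫_p^{min/2} and 𝒫_p^{min/max} are cone subequations of Riesz characteristic p. -/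
open Set Filter Topology Matrix

noncomputable section

open scoped Classical in
/-- The ordered (nondecreasing) eigenvalues of a symmetric (Hermitian) real matrix;
junk value `0` if the matrix is not Hermitian. -/
noncomputable def ordEig {n : ℕ} (A : Matrix (Fin n) (Fin n) ℝ) : Fin n → ℝ :=
  if hA : A.IsHermitian then fun k => hA.eigenvalues (Tuple.sort hA.eigenvalues k) else 0

/-- `lamK A k` is the `(k+1)`-st smallest eigenvalue `λ_{k+1}(A)` (for `k < n`). -/
noncomputable def lamK {n : ℕ} (A : Matrix (Fin n) (Fin n) ℝ) (k : ℕ) : ℝ :=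
  if h : k < n then ordEig A ⟨k, h⟩ else 0

/-- `𝒫_p^{min/2} = {A : λ₁(A) + (p−1) λ₂(A) ≥ 0}`. -/
def Pmin2 (n : ℕ) (p : ℝ) : Set (Matrix (Fin n) (Fin n) ℝ) :=
  {A | A.IsSymm ∧ 0 ≤ lamK A 0 + (p - 1) * lamK A 1}

/-- `𝒫_p^{min/max} = {A : λ₁(A) + (p−1) λₙ(A) ≥ 0}`. -/
def PminMax (n : ℕ) (p : ℝ) : Set (Matrix (Fin n) (Fin n) ℝ) :=
  {A | A.IsSymm ∧ 0 ≤ lamK A 0 + (p - 1) * lamK A (n - 1)}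

/-- `𝒫̃_q^{min/max} = {A : λₙ(A) + (q−1) λ₁(A) ≥ 0}`. -/
def PdualMinMax (n : ℕ) (q : ℝ) : Set (Matrix (Fin n) (Fin n) ℝ) :=
  {A | A.IsSymm ∧ 0 ≤ lamK A (n - 1) + (q - 1) * lamK A 0}

/-- `𝒫̃_q^{min/2} = {A : λₙ(A) + (q−1) λ_{n−1}(A) ≥ 0}`. -/
def PdualMin2 (n : ℕ) (q : ℝ) : Set (Matrix (Fin n) (Fin n) ℝ) :=
  {A | A.IsSymm ∧ 0 ≤ lamK A (n - 1) + (q - 1) * lamK A (n - 2)}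

/-! Ordered eigenvalues are monotone for the Loewner order (by a Courant–Fischer dimension
count), positively homogeneous and Lipschitz, so `𝒫_p^{min/2}` and `𝒫_p^{min/max}` are closed
cone subequations. The matrix `R_e = P_{e⊥} − (p−1) P_e` has eigenvalues `1 − p, 1, …, 1`: it lies
in `𝒫_p^{min/2}` and is a limit of the matrices `R_e − t P_e ∉ 𝒫_p^{min/max}`, `t > 0`, which gives
the Riesz characteristic of every `F` squeezed between the two sets.

Conversely, let `e` be an eigenvector of `A` for `λ₁(A)`. If `A ∈ 𝒫_p^{min/2}` then
`A ≥ λ₂(A) R_e ∈ F`. If `A ∈ F` but `λ₁ + (p−1)λₙ < 0`, then `A ≤ a P_{e⊥} + λ₁ P_e` with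
`a = max λₙ 0`, and a positive multiple of the right-hand side equals `R_e − ε I` with `ε > 0`,
which puts `R_e` in the interior of `F`. -/

open scoped MatrixOrder RealInnerProductSpace

namespace OrthonormalBasis

variable {ι E : Type*} [Fintype ι] [NormedAddCommGroup E] [InnerProductSpace ℝ E]
  {T S : E →ₗ[ℝ] E} {μ ν : ι → ℝ}

lemma inner_map_self_eq_sum (v : OrthonormalBasis ι ℝ E) (hv : ∀ i, T (v i) = μ i • v i)
    (x : E) : ⟪T x, x⟫ = ∑ i, μ i * ⟪v i, x⟫ ^ 2 := by
  have hTx : T x = ∑ i, (⟪v i, x⟫ * μ i) • v i := by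
    conv_lhs => rw [← v.sum_repr' x]
    simp only [map_sum, map_smul, hv, smul_smul]
  simp only [hTx, sum_inner, inner_smul_left, conj_trivial]
  exact Finset.sum_congr rfl fun i _ => by ring

lemma inner_map_self_le_of_le (v : OrthonormalBasis ι ℝ E) (hT : ∀ i, T (v i) = μ i • v i)
    (hS : ∀ i, S (v i) = ν i • v i) (hμν : μ ≤ ν) (x : E) : ⟪T x, x⟫ ≤ ⟪S x, x⟫ := by
  rw [v.inner_map_self_eq_sum hT, v.inner_map_self_eq_sum hS]
  gcongr with i
  exact hμν i

lemma inner_eq_zero_of_mem_span (v : OrthonormalBasis ι ℝ E) {s : Set ι} {x : E}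
    (hx : x ∈ Submodule.span ℝ (v '' s)) {j : ι} (hj : j ∉ s) : ⟪v j, x⟫ = 0 := by
  classical
  have hker : Submodule.span ℝ (v '' s) ≤ LinearMap.ker (innerₛₗ ℝ (v j)) := by
    refine Submodule.span_le.mpr ?_
    rintro _ ⟨i, hi, rfl⟩
    simp [v.inner_eq_ite, show j ≠ i by rintro rfl; exact hj hi]
  exact hker hx

lemma mul_norm_sq_le_inner_map_self (v : OrthonormalBasis ι ℝ E) (hv : ∀ i, T (v i) = μ i • v i)
    {s : Set ι} {c : ℝ} (hc : ∀ i ∈ s, c ≤ μ i) {x : E} (hx : x ∈ Submodule.span ℝ (v '' s)) :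
    c * ‖x‖ ^ 2 ≤ ⟪T x, x⟫ := by
  rw [v.inner_map_self_eq_sum hv, ← v.sum_sq_inner_right, Finset.mul_sum]
  refine Finset.sum_le_sum fun i _ => ?_
  by_cases hi : i ∈ s
  · exact mul_le_mul_of_nonneg_right (hc i hi) (sq_nonneg _)
  · simp [v.inner_eq_zero_of_mem_span hx hi]

lemma inner_map_self_le_mul_norm_sq (v : OrthonormalBasis ι ℝ E) (hv : ∀ i, T (v i) = μ i • v i)
    {s : Set ι} {c : ℝ} (hc : ∀ i ∈ s, μ i ≤ c) {x : E} (hx : x ∈ Submodule.span ℝ (v '' s)) :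
    ⟪T x, x⟫ ≤ c * ‖x‖ ^ 2 := by
  rw [v.inner_map_self_eq_sum hv, ← v.sum_sq_inner_right, Finset.mul_sum]
  refine Finset.sum_le_sum fun i _ => ?_
  by_cases hi : i ∈ s
  · exact mul_le_mul_of_nonneg_right (hc i hi) (sq_nonneg _)
  · simp [v.inner_eq_zero_of_mem_span hx hi]

lemma finrank_span_image (v : OrthonormalBasis ι ℝ E) (s : Finset ι) :
    Module.finrank ℝ (Submodule.span ℝ (v '' s)) = s.card := by
  rw [Set.image_eq_range, ← Fintype.card_coe s]
  exact finrank_span_eq_card (v.orthonormal.linearIndependent.comp _ Subtype.val_injective)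

/-- The spans of the `v i` with `k ≤ i` and of the `w i` with `i ≤ k` have dimensions adding up
to `n + 1`, so they share a vector `x ≠ 0`, and `μ k ‖x‖² ≤ ⟪T x, x⟫ ≤ ⟪S x, x⟫ ≤ ν k ‖x‖²`. -/
theorem eigenvalue_le_of_inner_map_self_le {n : ℕ} {μ ν : Fin n → ℝ}
    (v w : OrthonormalBasis (Fin n) ℝ E) (hμ : Monotone μ) (hν : Monotone ν)
    (hv : ∀ i, T (v i) = μ i • v i) (hw : ∀ i, S (w i) = ν i • w i)
    (hTS : ∀ x, ⟪T x, x⟫ ≤ ⟪S x, x⟫) (k : Fin n) : μ k ≤ ν k := by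
  have : FiniteDimensional ℝ E := v.toBasis.finiteDimensional_of_finite
  set V := Submodule.span ℝ (v '' ↑(Finset.Ici k))
  set W := Submodule.span ℝ (w '' ↑(Finset.Iic k))
  have hVW : V ⊓ W ≠ ⊥ := by
    intro hbot
    have hsum := Submodule.finrank_sup_add_finrank_inf_eq V W
    have hle := (V ⊔ W).finrank_le
    rw [hbot, finrank_bot, v.finrank_span_image, w.finrank_span_image, Fin.card_Ici,
      Fin.card_Iic] at hsum
    rw [Module.finrank_eq_card_basis v.toBasis, Fintype.card_fin] at hle
    omega
  obtain ⟨x, ⟨hxV, hxW⟩, hx0⟩ := Submodule.exists_mem_ne_zero_of_ne_bot hVW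
  have hlow := v.mul_norm_sq_le_inner_map_self hv (fun i hi => hμ (by simpa using hi)) hxV
  have hup := w.inner_map_self_le_mul_norm_sq hw (fun i hi => hν (by simpa using hi)) hxW
  have hx : 0 < ‖x‖ ^ 2 := by positivity
  exact le_of_mul_le_mul_right (hlow.trans ((hTS x).trans hup)) hx

end OrthonormalBasis

section OrderedEigenvalues

variable {n : ℕ} {A B : Matrix (Fin n) (Fin n) ℝ}

lemma Matrix.le_iff_inner_toEuclideanLin_le (hA : A.IsHermitian) (hB : B.IsHermitian) :
    A ≤ B ↔ ∀ x, ⟪toEuclideanLin A x, x⟫ ≤ ⟪toEuclideanLin B x, x⟫ := by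
  rw [le_iff, ← isPositive_toEuclideanLin_iff, LinearMap.IsPositive,
    isSymmetric_toEuclideanLin_iff]
  simp [isHermitian_iff_isSymm.mp (hB.sub hA), inner_sub_left]

lemma Matrix.le_of_eigenbasis (hA : A.IsHermitian) (hB : B.IsHermitian)
    (v : OrthonormalBasis (Fin n) ℝ (EucSp n)) {μ ν : Fin n → ℝ}
    (hAv : ∀ i, toEuclideanLin A (v i) = μ i • v i)
    (hBv : ∀ i, toEuclideanLin B (v i) = ν i • v i) (hμν : μ ≤ ν) : A ≤ B :=
  (le_iff_inner_toEuclideanLin_le hA hB).mpr (v.inner_map_self_le_of_le hAv hBv hμν)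

def Matrix.IsHermitian.sortedEigenbasis (hA : A.IsHermitian) :
    OrthonormalBasis (Fin n) ℝ (EucSp n) :=
  hA.eigenvectorBasis.reindex (Tuple.sort hA.eigenvalues).symm

lemma ordEig_of_isHermitian (hA : A.IsHermitian) :
    ordEig A = fun k => hA.eigenvalues (Tuple.sort hA.eigenvalues k) := by
  rw [ordEig, dif_pos hA]

lemma monotone_ordEig (hA : A.IsHermitian) : Monotone (ordEig A) := by
  rw [ordEig_of_isHermitian hA]
  exact Tuple.monotone_sort hA.eigenvalues

lemma Matrix.IsHermitian.toEuclideanLin_sortedEigenbasis (hA : A.IsHermitian) (k : Fin n) :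
    toEuclideanLin A (hA.sortedEigenbasis k) = ordEig A k • hA.sortedEigenbasis k := by
  rw [ordEig_of_isHermitian hA, sortedEigenbasis, OrthonormalBasis.reindex_apply,
    Equiv.symm_symm]
  apply WithLp.ofLp_injective
  simpa [toLpLin_apply] using hA.mulVec_eigenvectorBasis (Tuple.sort hA.eigenvalues k)

lemma ordEig_eq_of_eigenbasis (hA : A.IsHermitian) (v : OrthonormalBasis (Fin n) ℝ (EucSp n))
    {μ : Fin n → ℝ} (hμ : Monotone μ) (hv : ∀ i, toEuclideanLin A (v i) = μ i • v i) :
    ordEig A = μ := by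
  have hs := hA.toEuclideanLin_sortedEigenbasis
  funext k
  exact le_antisymm
    (hA.sortedEigenbasis.eigenvalue_le_of_inner_map_self_le v (monotone_ordEig hA) hμ hs hv
      (fun _ => le_rfl) k)
    (v.eigenvalue_le_of_inner_map_self_le hA.sortedEigenbasis hμ (monotone_ordEig hA) hv hs
      (fun _ => le_rfl) k)

lemma ordEig_le_ordEig (hA : A.IsHermitian) (hAB : A ≤ B) (k : Fin n) :
    ordEig A k ≤ ordEig B k := by
  have hB : B.IsHermitian := by simpa using hA.add (le_iff.mp hAB).isHermitian
  exact hA.sortedEigenbasis.eigenvalue_le_of_inner_map_self_le hB.sortedEigenbasis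
    (monotone_ordEig hA) (monotone_ordEig hB) hA.toEuclideanLin_sortedEigenbasis
    hB.toEuclideanLin_sortedEigenbasis ((le_iff_inner_toEuclideanLin_le hA hB).mp hAB) k

lemma ordEig_smul (hA : A.IsHermitian) {t : ℝ} (ht : 0 ≤ t) :
    ordEig (t • A) = t • ordEig A := by
  refine ordEig_eq_of_eigenbasis (hA.smul (.all t)) hA.sortedEigenbasis
    ((monotone_ordEig hA).const_smul ht) fun i => ?_
  rw [map_smul, LinearMap.smul_apply, hA.toEuclideanLin_sortedEigenbasis, smul_smul,
    Pi.smul_apply, smul_eq_mul]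

lemma ordEig_add_smul_one (hA : A.IsHermitian) (c : ℝ) :
    ordEig (A + c • 1) = ordEig A + fun _ => c := by
  refine ordEig_eq_of_eigenbasis (hA.add (isHermitian_one.smul (.all c))) hA.sortedEigenbasis
    ((monotone_ordEig hA).add_const c) fun i => ?_
  simp [hA.toEuclideanLin_sortedEigenbasis, add_smul]

lemma lamK_of_lt (A : Matrix (Fin n) (Fin n) ℝ) {k : ℕ} (hk : k < n) :
    lamK A k = ordEig A ⟨k, hk⟩ :=
  dif_pos hk

end OrderedEigenvalues

section AxialMatrices

variable {n : ℕ} {A : Matrix (Fin n) (Fin n) ℝ} {e : EucSp n} {a b : ℝ}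

lemma toEuclideanLin_projMat (e x : EucSp n) :
    toEuclideanLin (projMat e) x = ⟪e, x⟫ • e := by
  ext i
  simp only [projMat, toLpLin_apply, mulVec, dotProduct, PiLp.inner_apply, Finset.sum_mul,
    of_apply, PiLp.smul_apply, smul_eq_mul, RCLike.inner_apply, conj_trivial]
  exact Finset.sum_congr rfl fun j _ => by ring

lemma isHermitian_projMat (e : EucSp n) : (projMat e).IsHermitian := by
  ext i j
  simp [projMat, mul_comm]

def axialMat (e : EucSp n) (a b : ℝ) : Matrix (Fin n) (Fin n) ℝ :=
  a • (1 - projMat e) + b • projMat e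

lemma isHermitian_axialMat (e : EucSp n) (a b : ℝ) : (axialMat e a b).IsHermitian :=
  ((isHermitian_one.sub (isHermitian_projMat e)).smul (.all a)).add
    ((isHermitian_projMat e).smul (.all b))

lemma smul_axialMat (t : ℝ) : t • axialMat e a b = axialMat e (t * a) (t * b) := by
  simp only [axialMat, smul_add, smul_smul]

lemma axialMat_sub_smul_one (c : ℝ) : axialMat e a b - c • 1 = axialMat e (a - c) (b - c) := by
  simp only [axialMat]
  module

lemma one_sub_projMat_sub_smul_projMat (p : ℝ) (e : EucSp n) :
    (1 - projMat e) - (p - 1) • projMat e = axialMat e 1 (1 - p) := by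
  simp only [axialMat]
  module

lemma toEuclideanLin_axialMat_apply {ι : Type*} [Fintype ι] [DecidableEq ι]
    (w : OrthonormalBasis ι ℝ (EucSp n)) {i₀ : ι} (hw : w i₀ = e) (i : ι) :
    toEuclideanLin (axialMat e a b) (w i) = (if i = i₀ then b else a) • w i := by
  subst hw
  rcases eq_or_ne i i₀ with rfl | hi
  · simp [axialMat, toEuclideanLin_projMat]
  · simp [axialMat, toEuclideanLin_projMat, w.inner_eq_ite, hi, Ne.symm hi]

lemma exists_orthonormalBasis_apply_eq (he : ‖e‖ = 1) (i₀ : Fin n) :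
    ∃ w : OrthonormalBasis (Fin n) ℝ (EucSp n), w i₀ = e := by
  have hortho : Orthonormal ℝ (({i₀} : Set (Fin n)).domRestrict fun _ => e) :=
    ⟨fun _ => he, fun i j hij => absurd (Subtype.ext (i.2.trans j.2.symm)) hij⟩
  obtain ⟨w, hw⟩ := hortho.exists_orthonormalBasis_extension_of_card_eq (by simp)
  exact ⟨w, hw i₀ rfl⟩

lemma ordEig_axialMat (he : ‖e‖ = 1) (hba : b ≤ a) (hn : 0 < n) :
    ordEig (axialMat e a b) = fun i => if i = ⟨0, hn⟩ then b else a := by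
  obtain ⟨w, hw⟩ := exists_orthonormalBasis_apply_eq he ⟨0, hn⟩
  refine ordEig_eq_of_eigenbasis (isHermitian_axialMat e a b) w (fun i j hij => ?_)
    (toEuclideanLin_axialMat_apply w hw)
  split_ifs with hi hj hj
  exacts [le_rfl, hba, absurd (Fin.ext (by simp [Fin.le_def, hj] at hij; omega)) hi, le_rfl]

lemma lamK_axialMat (he : ‖e‖ = 1) (hba : b ≤ a) {k : ℕ} (hk : k < n) :
    lamK (axialMat e a b) k = if k = 0 then b else a := by
  simp [lamK, hk, ordEig_axialMat he hba (by omega), Fin.ext_iff]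

lemma axialMat_sortedEigenbasis_le (hA : A.IsHermitian) (hn : 0 < n)
    (hb : b ≤ ordEig A ⟨0, hn⟩) (ha : ∀ i, i ≠ ⟨0, hn⟩ → a ≤ ordEig A i) :
    axialMat (hA.sortedEigenbasis ⟨0, hn⟩) a b ≤ A :=
  le_of_eigenbasis (isHermitian_axialMat _ a b) hA hA.sortedEigenbasis
    (toEuclideanLin_axialMat_apply _ rfl) hA.toEuclideanLin_sortedEigenbasis
    fun i => by split_ifs with hi <;> [exact hi ▸ hb; exact ha i hi]

lemma le_axialMat_sortedEigenbasis (hA : A.IsHermitian) (hn : 0 < n)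
    (hb : ordEig A ⟨0, hn⟩ ≤ b) (ha : ∀ i, ordEig A i ≤ a) :
    A ≤ axialMat (hA.sortedEigenbasis ⟨0, hn⟩) a b :=
  le_of_eigenbasis hA (isHermitian_axialMat _ a b) hA.sortedEigenbasis
    hA.toEuclideanLin_sortedEigenbasis (toEuclideanLin_axialMat_apply _ rfl)
    fun i => by split_ifs with hi <;> [exact hi ▸ hb; exact ha i]

end AxialMatrices

lemma IsSubequation.mem_of_le {n : ℕ} {F : Set (Matrix (Fin n) (Fin n) ℝ)}
    {A B : Matrix (Fin n) (Fin n) ℝ} (hF : IsSubequation F) (hA : A ∈ F) (hAB : A ≤ B) :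
    B ∈ F := by
  simpa using hF.2.2 A hA (B - A) hAB

/- The entrywise sup norm induces the product topology of `Matrix`, so it can be used for the
topological statements `IsClosed` and `symInterior`. -/
section SupNorm

attribute [local instance] Matrix.normedAddCommGroup

variable {n : ℕ} {A B : Matrix (Fin n) (Fin n) ℝ}

lemma Matrix.inner_toEuclideanLin_self_le (M : Matrix (Fin n) (Fin n) ℝ) (x : EucSp n) :
    ⟪toEuclideanLin M x, x⟫ ≤ n * ‖M‖ * ‖x‖ ^ 2 := by
  calc ⟪toEuclideanLin M x, x⟫ = ∑ i, ∑ j, M i j * (x i * x j) := by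
        simp [toLpLin_apply, PiLp.inner_apply, mulVec, dotProduct, Finset.mul_sum,
          mul_left_comm]
    _ ≤ ∑ i, ∑ j, ‖M‖ * (|x i| * |x j|) := by
        refine Finset.sum_le_sum fun i _ => Finset.sum_le_sum fun j _ => ?_
        calc M i j * (x i * x j) ≤ |M i j| * (|x i| * |x j|) := by
              simpa only [abs_mul] using le_abs_self (M i j * (x i * x j))
          _ ≤ ‖M‖ * (|x i| * |x j|) := by
              gcongr
              exact norm_entry_le_entrywise_sup_norm M
    _ = ‖M‖ * (∑ i, |x i|) ^ 2 := by
        simp_rw [sq, Finset.sum_mul_sum, Finset.mul_sum]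
    _ ≤ ‖M‖ * (n * ∑ i, |x i| ^ 2) := by
        gcongr
        simpa using sq_sum_le_card_mul_sum_sq (s := Finset.univ) (f := fun i => |x i|)
    _ = n * ‖M‖ * ‖x‖ ^ 2 := by
        simp [EuclideanSpace.norm_sq_eq]
        ring

lemma Matrix.le_smul_one_of_mul_norm_le {M : Matrix (Fin n) (Fin n) ℝ} (hM : M.IsHermitian)
    {c : ℝ} (hc : n * ‖M‖ ≤ c) : M ≤ c • 1 := by
  rw [le_iff_inner_toEuclideanLin_le hM (isHermitian_one.smul (.all c))]
  intro x
  calc ⟪toEuclideanLin M x, x⟫ ≤ n * ‖M‖ * ‖x‖ ^ 2 := inner_toEuclideanLin_self_le M x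
    _ ≤ c * ‖x‖ ^ 2 := by gcongr
    _ = ⟪toEuclideanLin (c • 1) x, x⟫ := by simp [real_inner_smul_left]

lemma ordEig_le_add_mul_norm (hA : A.IsHermitian) (hB : B.IsHermitian) (k : Fin n) :
    ordEig B k ≤ ordEig A k + n * ‖B - A‖ := by
  have hle : B ≤ A + (n * ‖B - A‖) • 1 :=
    sub_le_iff_le_add'.mp (le_smul_one_of_mul_norm_le (hB.sub hA) le_rfl)
  simpa [ordEig_add_smul_one hA] using ordEig_le_ordEig hB hle k

lemma continuousOn_ordEig (k : Fin n) :
    ContinuousOn (fun A : Matrix (Fin n) (Fin n) ℝ => ordEig A k) {A | A.IsHermitian} :=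
  (LipschitzOnWith.of_le_add_mul (n : NNReal) fun B hB A hA => by
    simpa [dist_eq_norm] using ordEig_le_add_mul_norm hA hB k).continuousOn

lemma IsSubequation.mem_symInterior_of_sub_smul_one_mem {F : Set (Matrix (Fin n) (Fin n) ℝ)}
    (hF : IsSubequation F) {ε : ℝ} (hε : 0 < ε) (h : A - ε • 1 ∈ F) : A ∈ symInterior F := by
  have hA : A.IsHermitian := by
    simpa using (isHermitian_iff_isSymm.mpr (hF.1 _ h)).add (isHermitian_one.smul (.all ε))
  refine ⟨{B | n * ‖A - B‖ < ε}, IsOpen.mem_nhds (isOpen_lt (by fun_prop) continuous_const)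
    (by simpa using hε), fun B hB hBs => hF.mem_of_le h ?_⟩
  exact sub_le_comm.mp
    (le_smul_one_of_mul_norm_le (hA.sub (isHermitian_iff_isSymm.mpr hBs)) hB.le)

end SupNorm

section Riesz

variable {n : ℕ} {p a b : ℝ} {F : Set (Matrix (Fin n) (Fin n) ℝ)} {e : EucSp n}

lemma isConeSubequation_setOf_lamK {q : ℝ} (hq : 0 ≤ q) {k₁ k₂ : ℕ} (h₁ : k₁ < n)
    (h₂ : k₂ < n) :
    IsConeSubequation
      {A : Matrix (Fin n) (Fin n) ℝ | A.IsSymm ∧ 0 ≤ lamK A k₁ + q * lamK A k₂} := by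
  simp only [lamK, dif_pos h₁, dif_pos h₂]
  refine ⟨⟨fun A hA => hA.1, ?closed, ?positivity⟩, ?cone⟩
  case closed =>
    have hcont : ContinuousOn (fun A => ordEig A ⟨k₁, h₁⟩ + q * ordEig A ⟨k₂, h₂⟩)
        {A : Matrix (Fin n) (Fin n) ℝ | A.IsHermitian} :=
      (continuousOn_ordEig _).add (continuousOn_const.mul (continuousOn_ordEig _))
    simp only [isHermitian_iff_isSymm] at hcont
    exact hcont.preimage_isClosed_of_isClosed
      (isClosed_eq continuous_id.matrix_transpose continuous_id) isClosed_Ici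
  case positivity =>
    rintro A ⟨hAs, hA⟩ P hP
    have hAh := isHermitian_iff_isSymm.mpr hAs
    have hle : A ≤ A + P := le_add_of_nonneg_right hP.nonneg
    refine ⟨isHermitian_iff_isSymm.mp (hAh.add hP.isHermitian), ?_⟩
    have h₁ := ordEig_le_ordEig hAh hle ⟨k₁, h₁⟩
    have h₂ := ordEig_le_ordEig hAh hle ⟨k₂, h₂⟩
    nlinarith
  case cone =>
    rintro A ⟨hAs, hA⟩ t ht
    have hAh := isHermitian_iff_isSymm.mpr hAs
    refine ⟨isHermitian_iff_isSymm.mp (hAh.smul (.all t)), ?_⟩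
    simp only [ordEig_smul hAh ht, Pi.smul_apply, smul_eq_mul]
    nlinarith

lemma Pmin2_subset_PminMax (hn : 2 ≤ n) (hp : 1 ≤ p) : Pmin2 n p ⊆ PminMax n p := by
  rintro A ⟨hAs, hA⟩
  refine ⟨hAs, ?_⟩
  rw [lamK_of_lt A (by omega : 1 < n)] at hA
  rw [lamK_of_lt A (by omega : n - 1 < n)]
  have := monotone_ordEig (isHermitian_iff_isSymm.mpr hAs)
    (show (⟨1, by omega⟩ : Fin n) ≤ ⟨n - 1, by omega⟩ by simp [Fin.le_def]; omega)
  nlinarith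

lemma axialMat_mem_Pmin2_iff (hn : 2 ≤ n) (he : ‖e‖ = 1) (hba : b ≤ a) :
    axialMat e a b ∈ Pmin2 n p ↔ 0 ≤ b + (p - 1) * a := by
  simp [Pmin2, lamK_axialMat he hba (by omega : 0 < n), lamK_axialMat he hba (by omega : 1 < n),
    isHermitian_iff_isSymm.mp (isHermitian_axialMat e a b)]

lemma axialMat_mem_PminMax_iff (hn : 2 ≤ n) (he : ‖e‖ = 1) (hba : b ≤ a) :
    axialMat e a b ∈ PminMax n p ↔ 0 ≤ b + (p - 1) * a := by
  simp [PminMax, lamK_axialMat he hba (by omega : 0 < n),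
    lamK_axialMat he hba (by omega : n - 1 < n),
    isHermitian_iff_isSymm.mp (isHermitian_axialMat e a b), show n - 1 ≠ 0 by omega]

lemma hasRieszChar_of_Pmin2_subset_of_subset_PminMax (hn : 2 ≤ n) (hp : 1 ≤ p)
    (h₁ : Pmin2 n p ⊆ F) (h₂ : F ⊆ PminMax n p) : HasRieszChar F p := by
  refine ⟨hp, fun e he => ?_⟩
  rw [one_sub_projMat_sub_smul_projMat]
  refine ⟨subset_closure (h₁ ((axialMat_mem_Pmin2_iff hn he (by linarith)).mpr (by linarith))),
    ?_⟩
  rintro ⟨U, hU, hUF⟩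
  have hlim : Tendsto (fun t : ℝ => axialMat e 1 (1 - p - t)) (𝓝[>] 0)
      (𝓝 (axialMat e 1 (1 - p))) := by
    refine tendsto_nhdsWithin_of_tendsto_nhds ?_
    have : Continuous fun t : ℝ => axialMat e 1 (1 - p - t) := by unfold axialMat; fun_prop
    simpa using this.tendsto 0
  obtain ⟨t, htU, ht⟩ := ((hlim.eventually_mem hU).and self_mem_nhdsWithin).exists
  have ht : 0 < t := ht
  have hmem := h₂ (hUF _ htU (isHermitian_iff_isSymm.mp (isHermitian_axialMat _ _ _)))
  rw [axialMat_mem_PminMax_iff hn he (by linarith)] at hmem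
  linarith

lemma HasRieszChar.axialMat_mem (hF : IsSubequation F) (hR : HasRieszChar F p) (he : ‖e‖ = 1) :
    axialMat e 1 (1 - p) ∈ F := by
  simpa [hF.2.1.closure_eq, one_sub_projMat_sub_smul_projMat] using (hR.2 e he).1

lemma HasRieszChar.axialMat_notMem_symInterior (hR : HasRieszChar F p) (he : ‖e‖ = 1) :
    axialMat e 1 (1 - p) ∉ symInterior F := by
  simpa [one_sub_projMat_sub_smul_projMat] using (hR.2 e he).2

lemma Pmin2_subset_of_hasRieszChar (hn : 2 ≤ n) (hF : IsConeSubequation F)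
    (hR : HasRieszChar F p) : Pmin2 n p ⊆ F := by
  rintro A ⟨hAs, hA⟩
  have hAh := isHermitian_iff_isSymm.mpr hAs
  rw [lamK_of_lt A (by omega : 0 < n), lamK_of_lt A (by omega : 1 < n)] at hA
  have h01 : ordEig A ⟨0, by omega⟩ ≤ ordEig A ⟨1, by omega⟩ :=
    monotone_ordEig hAh (by simp [Fin.le_def])
  have hμ₂ : 0 ≤ ordEig A ⟨1, by omega⟩ := by nlinarith [hR.1]
  have hRe := hR.axialMat_mem hF.1 (hAh.sortedEigenbasis.norm_eq_one ⟨0, by omega⟩)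
  refine hF.1.mem_of_le (hF.2 _ hRe _ hμ₂) ?_
  rw [smul_axialMat, mul_one]
  refine axialMat_sortedEigenbasis_le hAh _ (by nlinarith) fun i hi => monotone_ordEig hAh ?_
  simpa [Fin.le_def, Fin.ext_iff, Nat.one_le_iff_ne_zero] using hi

lemma subset_PminMax_of_hasRieszChar (hn : 2 ≤ n) (hF : IsConeSubequation F)
    (hR : HasRieszChar F p) : F ⊆ PminMax n p := by
  intro A hAF
  have hAh := isHermitian_iff_isSymm.mpr (hF.1.1 A hAF)
  refine ⟨hF.1.1 A hAF, ?_⟩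
  rw [lamK_of_lt A (by omega : 0 < n), lamK_of_lt A (by omega : n - 1 < n)]
  set μ₁ := ordEig A ⟨0, by omega⟩
  set μₙ := ordEig A ⟨n - 1, by omega⟩
  by_contra! hneg
  have hp := hR.1
  have hμ₁ : μ₁ < 0 := by
    have : μ₁ ≤ μₙ := monotone_ordEig hAh (by simp [Fin.le_def])
    nlinarith
  set e := hAh.sortedEigenbasis ⟨0, by omega⟩
  have he : ‖e‖ = 1 := hAh.sortedEigenbasis.norm_eq_one _
  set a := max μₙ 0
  have ha : μ₁ + (p - 1) * a < 0 := by
    rcases le_total μₙ 0 with h | h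
    · simp [a, max_eq_right h, hμ₁]
    · simpa [a, max_eq_left h] using hneg
  have hM : axialMat e a μ₁ ∈ F :=
    hF.1.mem_of_le hAF (le_axialMat_sortedEigenbasis hAh _ le_rfl fun i =>
      (monotone_ordEig hAh (by simp [Fin.le_def]; omega)).trans (le_max_left _ _))
  -- `t` makes both eigenvalues of `axialMat e 1 (1 - p) - t • axialMat e a μ₁` equal `1 - t * a`
  set t := p / (a - μ₁)
  have hD : 0 < a - μ₁ := by linarith [le_max_right μₙ 0]
  have htD : t * (a - μ₁) = p := div_mul_cancel₀ _ hD.ne'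
  have hε : 0 < 1 - t * a := by nlinarith
  have hRe : axialMat e 1 (1 - p) - (1 - t * a) • 1 = t • axialMat e a μ₁ := by
    rw [axialMat_sub_smul_one, smul_axialMat]
    congr 1 <;> linarith
  refine hR.axialMat_notMem_symInterior he
    (hF.1.mem_symInterior_of_sub_smul_one_mem hε ?_)
  rw [hRe]
  exact hF.2 _ hM t (div_nonneg (by linarith) hD.le)

end Riesz

theorem stmt4_general (n : ℕ) (hn : 2 ≤ n) (p : ℝ) (hp : 1 ≤ p)
    (F : Set (Matrix (Fin n) (Fin n) ℝ))
    (hF : IsConeSubequation F) :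
    (HasRieszChar F p ↔ Pmin2 n p ⊆ F ∧ F ⊆ PminMax n p) ∧
    IsConeSubequation (Pmin2 n p) ∧ HasRieszChar (Pmin2 n p) p ∧
    IsConeSubequation (PminMax n p) ∧ HasRieszChar (PminMax n p) p := by
  have hsub := Pmin2_subset_PminMax hn hp
  refine ⟨⟨fun hR => ⟨Pmin2_subset_of_hasRieszChar hn hF hR,
      subset_PminMax_of_hasRieszChar hn hF hR⟩,
    fun h => hasRieszChar_of_Pmin2_subset_of_subset_PminMax hn hp h.1 h.2⟩,
    isConeSubequation_setOf_lamK (by linarith) (by omega) (by omega),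
    hasRieszChar_of_Pmin2_subset_of_subset_PminMax hn hp subset_rfl hsub,
    isConeSubequation_setOf_lamK (by linarith) (by omega) (by omega),
    hasRieszChar_of_Pmin2_subset_of_subset_PminMax hn hp hsub subset_rfl⟩

/-- An ST-invariant cone subequation has finite Riesz characteristic `p` iff
`𝒫_p^{min/2} ⊆ F ⊆ 𝒫_p^{min/max}`; in particular both of these extreme sets are
cone subequations of Riesz characteristic `p`. -/
theorem stmt4 (n : ℕ) (hn : 2 ≤ n) (p : ℝ) (hp : 1 ≤ p)
    (F : Set (Matrix (Fin n) (Fin n) ℝ))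
    (hF : IsConeSubequation F) (hST : STInvariant F) :
    (HasRieszChar F p ↔ Pmin2 n p ⊆ F ∧ F ⊆ PminMax n p) ∧
    IsConeSubequation (Pmin2 n p) ∧ HasRieszChar (Pmin2 n p) p ∧
    IsConeSubequation (PminMax n p) ∧ HasRieszChar (PminMax n p) p :=
  stmt4_general n hn p hp F hF

end
end
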